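/- arXiv:2110.01084 — 15 statements merged into one kernel-verified Lean document; each statement's English description precedes it below -/
import Mathlib

section
/- Let f' satisfy the (M,L)-hybrid condition on s. Then for every u, v ∈ s one has f(u) − ℓ_f(u; v) ≤ 2M‖u − v‖ + (L/2)‖u − v‖². -/
open scoped RealInnerProductSpace

theorem stmt0 {E : Type*} [NormedAddCommGroup E] [InnerProductSpace ℝ E]
    (s : Set E) (hs : s.Nonempty) (hsconv : Convex ℝ s)
    (f : E → ℝ) (hf : ConvexOn ℝ s f)
    (f' : E → E)
    (hsub : ∀ x ∈ s, ∀ u ∈ s, f x + ⟪f' x, u - x⟫ ≤ f u)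
    (M L : ℝ) (hM : 0 ≤ M) (hL : 0 ≤ L)
    (hhyb : ∀ u ∈ s, ∀ v ∈ s, ‖f' u - f' v‖ ≤ 2 * M + L * ‖u - v‖) :
    ∀ u ∈ s, ∀ v ∈ s,
      f u - (f v + ⟪f' v, u - v⟫) ≤ 2 * M * ‖u - v‖ + L / 2 * ‖u - v‖ ^ 2 := by
  intro u hu v hv
  set d := u - v with hd
  set r := ‖d‖ with hr
  have hr0 : (0:ℝ) ≤ r := norm_nonneg _
  have hgauss : ∀ m : ℕ, (∑ k ∈ Finset.range m, ((k:ℝ)+1)) = m*(m+1)/2 := by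
    intro m
    induction m with
    | zero => simp
    | succ p ih => rw [Finset.sum_range_succ, ih]; push_cast; ring
  have key : ∀ n : ℕ, 0 < n →
      f u - (f v + ⟪f' v, u - v⟫) ≤ 2*M*r + L/2*r^2 + L*r^2/(2*n) := by
    intro n hn
    have hn' : (0:ℝ) < n := by exact_mod_cast hn
    set x : ℕ → E := fun k => v + ((k:ℝ)/n) • d with hx
    have hmem : ∀ k ≤ n, x k ∈ s := by
      intro k hk
      have ht0 : (0:ℝ) ≤ (k:ℝ)/n := by positivity
      have ht1 : (k:ℝ)/n ≤ 1 := by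
        rw [div_le_one hn']; exact_mod_cast hk
      have hxk : x k = (1 - (k:ℝ)/n) • v + ((k:ℝ)/n) • u := by
        simp only [hx, hd]
        module
      rw [hxk]
      exact hsconv hv hu (by linarith) ht0 (by ring)
    have hx0 : x 0 = v := by simp [hx]
    have hxn : x n = u := by
      simp only [hx, hd, div_self hn'.ne', one_smul]
      abel
    have hdiff : ∀ k : ℕ, x (k+1) - x k = ((1:ℝ)/n) • d := by
      intro k
      have h1 : (((k:ℕ)+1:ℝ))/n - (k:ℝ)/n = 1/n := by field_simp; ring
      calc x (k+1) - x k = ((((k:ℕ)+1:ℝ))/n - (k:ℝ)/n) • d := by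
            rw [sub_smul]; simp only [hx]; push_cast; abel
        _ = ((1:ℝ)/n) • d := by rw [h1]
    have hstep : ∀ k < n,
        f (x (k+1)) - f (x k) ≤ (1/n) * ⟪f' (x (k+1)), d⟫ := by
      intro k hk
      have h1 := hsub (x (k+1)) (hmem (k+1) hk) (x k) (hmem k (le_of_lt hk))
      have h2 : x k - x (k+1) = -(((1:ℝ)/n) • d) := by
        rw [← hdiff k]; abel
      rw [h2, inner_neg_right, real_inner_smul_right] at h1
      linarith
    have htel : f u - f v = ∑ k ∈ Finset.range n, (f (x (k+1)) - f (x k)) := by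
      rw [Finset.sum_range_sub (fun k => f (x k)), hx0, hxn]
    have hvsum : ⟪f' v, d⟫ = ∑ _k ∈ Finset.range n, (1/(n:ℝ)) * ⟪f' v, d⟫ := by
      rw [Finset.sum_const, Finset.card_range, nsmul_eq_mul]
      field_simp
    have hnorm : ∀ k < n, ‖x (k+1) - v‖ = (((k:ℝ)+1)/n) * r := by
      intro k hk
      have : x (k+1) - v = ((((k:ℕ)+1:ℝ))/n) • d := by
        simp only [hx]; push_cast; abel
      rw [this, norm_smul, Real.norm_eq_abs, abs_of_nonneg (by positivity)]
    have hterm : ∀ k < n,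
        (1/(n:ℝ)) * ⟪f' (x (k+1)) - f' v, d⟫ ≤
          (1/(n:ℝ)) * ((2*M + L * ((((k:ℝ)+1)/n) * r)) * r) := by
      intro k hk
      have h1 : ⟪f' (x (k+1)) - f' v, d⟫ ≤ ‖f' (x (k+1)) - f' v‖ * r :=
        real_inner_le_norm _ _
      have h2 := hhyb (x (k+1)) (hmem (k+1) hk) v hv
      rw [hnorm k hk] at h2
      have h3 : ‖f' (x (k+1)) - f' v‖ * r ≤ (2*M + L * ((((k:ℝ)+1)/n) * r)) * r :=
        mul_le_mul_of_nonneg_right h2 hr0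
      have : ⟪f' (x (k+1)) - f' v, d⟫ ≤ (2*M + L * ((((k:ℝ)+1)/n) * r)) * r :=
        le_trans h1 h3
      have hninv : (0:ℝ) ≤ 1/(n:ℝ) := by positivity
      exact mul_le_mul_of_nonneg_left this hninv
    have hmain : f u - (f v + ⟪f' v, u - v⟫) ≤
        ∑ k ∈ Finset.range n, (1/(n:ℝ)) * ((2*M + L * ((((k:ℝ)+1)/n) * r)) * r) := by
      have h1 : f u - (f v + ⟪f' v, u - v⟫)
          = (∑ k ∈ Finset.range n, (f (x (k+1)) - f (x k)))
            - ∑ _k ∈ Finset.range n, (1/(n:ℝ)) * ⟪f' v, d⟫ := by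
        rw [← htel, ← hvsum, hd]; ring
      rw [h1, ← Finset.sum_sub_distrib]
      apply Finset.sum_le_sum
      intro k hk
      rw [Finset.mem_range] at hk
      have h2 := hstep k hk
      have h3 : (1/(n:ℝ)) * ⟪f' (x (k+1)), d⟫ - (1/(n:ℝ)) * ⟪f' v, d⟫
          = (1/(n:ℝ)) * ⟪f' (x (k+1)) - f' v, d⟫ := by
        rw [inner_sub_left]; ring
      calc f (x (k+1)) - f (x k) - (1/(n:ℝ)) * ⟪f' v, d⟫
          ≤ (1/(n:ℝ)) * ⟪f' (x (k+1)), d⟫ - (1/(n:ℝ)) * ⟪f' v, d⟫ := by linarith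
        _ = (1/(n:ℝ)) * ⟪f' (x (k+1)) - f' v, d⟫ := h3
        _ ≤ (1/(n:ℝ)) * ((2*M + L * ((((k:ℝ)+1)/n) * r)) * r) := hterm k hk
    have hsumeval : (∑ k ∈ Finset.range n, (1/(n:ℝ)) * ((2*M + L * ((((k:ℝ)+1)/n) * r)) * r))
        = 2*M*r + L*r^2 * ((n:ℝ)*((n:ℝ)+1)/2) / (n:ℝ)^2 := by
      have expand : ∀ k ∈ Finset.range n,
          (1/(n:ℝ)) * ((2*M + L * ((((k:ℝ)+1)/n) * r)) * r)
          = (1/(n:ℝ)) * (2*M*r) + (L*r^2/(n:ℝ)^2) * ((k:ℝ)+1) := by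
        intro k _
        field_simp
      rw [Finset.sum_congr rfl expand, Finset.sum_add_distrib,
        Finset.sum_const, Finset.card_range, ← Finset.mul_sum, hgauss n, nsmul_eq_mul]
      field_simp
    have hfinal : 2*M*r + L*r^2 * ((n:ℝ)*((n:ℝ)+1)/2) / (n:ℝ)^2
        = 2*M*r + L/2*r^2 + L*r^2/(2*n) := by
      field_simp
      ring
    calc f u - (f v + ⟪f' v, u - v⟫)
        ≤ ∑ k ∈ Finset.range n, (1/(n:ℝ)) * ((2*M + L * ((((k:ℝ)+1)/n) * r)) * r) := hmain
      _ = 2*M*r + L*r^2 * ((n:ℝ)*((n:ℝ)+1)/2) / (n:ℝ)^2 := hsumeval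
      _ = 2*M*r + L/2*r^2 + L*r^2/(2*n) := hfinal
  have hgoal : f u - (f v + ⟪f' v, u - v⟫) ≤ 2*M*r + L/2*r^2 := by
    apply le_of_forall_pos_le_add
    intro ε hε
    obtain ⟨n, hn⟩ := exists_nat_gt (max 1 (L*r^2/(2*ε)))
    have hn1 : (1:ℝ) < n := lt_of_le_of_lt (le_max_left _ _) hn
    have hnpos : 0 < n := by exact_mod_cast lt_trans zero_lt_one hn1
    have hnR : (0:ℝ) < n := by exact_mod_cast hnpos
    have hlt : L*r^2/(2*ε) < (n:ℝ) := lt_of_le_of_lt (le_max_right _ _) hn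
    have h2 : L*r^2 < 2*ε*(n:ℝ) := by
      rw [div_lt_iff₀ (by positivity)] at hlt
      linarith
    have h3 : L*r^2/(2*(n:ℝ)) < ε := by
      rw [div_lt_iff₀ (by positivity)]
      linarith
    calc f u - (f v + ⟪f' v, u - v⟫) ≤ 2*M*r + L/2*r^2 + L*r^2/(2*n) := key n hnpos
      _ ≤ 2*M*r + L/2*r^2 + ε := by linarith
  calc f u - (f v + ⟪f' v, u - v⟫) ≤ 2*M*r + L/2*r^2 := hgoal
    _ = 2 * M * ‖u - v‖ + L / 2 * ‖u - v‖ ^ 2 := by rw [hr, hd]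
end

section
/- For every u ∈ s and every k ≥ 1, φ(ŷ_k) − φ(u) ≤ ‖x̂_{k−1} − u‖²/(2λ) − ‖x̂_k − u‖²/(2λ_μ) + ε/2, where λ_μ := λ/(1 + λμ). -/
open scoped RealInnerProductSpace

lemma strong_min_aux {E : Type*} [NormedAddCommGroup E] [InnerProductSpace ℝ E]
    {s : Set E} {g : E → ℝ} {σ : ℝ} (hσ : 0 ≤ σ)
    (hg : ConvexOn ℝ s (fun u => g u - σ / 2 * ‖u‖ ^ 2))
    {x : E} (hx : x ∈ s) (hmin : IsMinOn g s x) :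
    ∀ u ∈ s, g x + σ / 2 * ‖u - x‖ ^ 2 ≤ g u := by
  intro u hu
  set B : ℝ := σ / 2 * ‖u - x‖ ^ 2 with hB
  have hB0 : 0 ≤ B := by positivity
  have key : ∀ t : ℝ, 0 < t → t ≤ 1 → B * (1 - t) ≤ g u - g x := by
    intro t ht0 ht1
    have ha0 : (0:ℝ) ≤ 1 - t := by linarith
    have hab : (1 - t) + t = 1 := by ring
    have hz : (1 - t) • x + t • u ∈ s := hg.1 hx hu ha0 ht0.le hab
    have hconv := hg.2 hx hu ha0 ht0.le hab
    have hminz : g x ≤ g ((1 - t) • x + t • u) := hmin hz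
    simp only [smul_eq_mul] at hconv
    have hid : (1 - t) * ‖x‖ ^ 2 + t * ‖u‖ ^ 2 - ‖(1 - t) • x + t • u‖ ^ 2
        = t * (1 - t) * ‖u - x‖ ^ 2 := by
      simp only [← real_inner_self_eq_norm_sq, inner_add_left, inner_add_right,
        inner_sub_left, inner_sub_right, real_inner_smul_left, real_inner_smul_right,
        real_inner_comm u x]
      ring
    rw [hB]
    nlinarith [mul_nonneg hσ (mul_nonneg (mul_nonneg ht0.le ha0) (sq_nonneg ‖u - x‖))]
  have h1 := key 1 one_pos le_rfl
  by_contra hlt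
  push_neg at hlt
  have hAB : g u - g x < B := by linarith
  have hBpos : 0 < B := lt_of_le_of_lt (by linarith) hAB
  have ht0 : 0 < (B - (g u - g x)) / (2 * B) := div_pos (by linarith) (by linarith)
  have ht1 : (B - (g u - g x)) / (2 * B) ≤ 1 := by
    rw [div_le_one (by linarith)]; linarith
  have h2 := key _ ht0 ht1
  have heq : B * (1 - (B - (g u - g x)) / (2 * B)) = (B + (g u - g x)) / 2 := by
    field_simp; ring
  rw [heq] at h2
  linarith

theorem stmt1 {E : Type*} [NormedAddCommGroup E] [InnerProductSpace ℝ E]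
    (s : Set E) (hs : s.Nonempty) (hsconv : Convex ℝ s)
    (f h : E → ℝ) (hf : ConvexOn ℝ s f) (hh : ConvexOn ℝ s h)
    (μ : ℝ) (hμ : 0 ≤ μ)
    (hhμ : ConvexOn ℝ s (fun z => h z - μ / 2 * ‖z‖ ^ 2))
    (lam ε : ℝ) (hlam : 0 < lam) (hε : 0 < ε)
    (x y : ℕ → E) (m : ℕ → ℝ) (Γ : ℕ → E → ℝ)
    (hxs : ∀ k, x k ∈ s) (hys : ∀ k, y k ∈ s)
    (hΓμ : ∀ k, 1 ≤ k → ConvexOn ℝ s (fun u => Γ k u - μ / 2 * ‖u‖ ^ 2))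
    (hΓφ : ∀ k, 1 ≤ k → ∀ u ∈ s, Γ k u ≤ f u + h u)
    (hmin : ∀ k, 1 ≤ k →
      IsMinOn (fun u => Γ k u + ‖u - x (k - 1)‖ ^ 2 / (2 * lam)) s (x k))
    (hm : ∀ k, 1 ≤ k → m k = Γ k (x k) + ‖x k - x (k - 1)‖ ^ 2 / (2 * lam))
    (ht : ∀ k, 1 ≤ k → (f (y k) + h (y k)) - m k ≤ ε / 2) :
    ∀ u ∈ s, ∀ k : ℕ, 1 ≤ k →
      (f (y k) + h (y k)) - (f u + h u) ≤
        ‖x (k - 1) - u‖ ^ 2 / (2 * lam) -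
          ‖x k - u‖ ^ 2 / (2 * (lam / (1 + lam * μ))) + ε / 2 := by
  intro u hu k hk
  set c : E := x (k - 1) with hc
  set σ : ℝ := μ + 1 / lam with hσdef
  have hσ0 : 0 ≤ σ := by positivity
  set g : E → ℝ := fun v => Γ k v + ‖v - c‖ ^ 2 / (2 * lam) with hgdef
  have haff : ConvexOn ℝ s (fun v => ‖c‖ ^ 2 / (2 * lam) - ⟪v, c⟫ / lam) := by
    refine ⟨hsconv, fun p hp q hq a b ha hb hab => le_of_eq ?_⟩
    simp only [smul_eq_mul, inner_add_left, real_inner_smul_left]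
    field_simp
    linear_combination (-‖c‖ ^ 2) * hab
  have hgconv : ConvexOn ℝ s (fun v => g v - σ / 2 * ‖v‖ ^ 2) := by
    have heq : (fun v => g v - σ / 2 * ‖v‖ ^ 2)
        = fun v => (Γ k v - μ / 2 * ‖v‖ ^ 2)
            + (‖c‖ ^ 2 / (2 * lam) - ⟪v, c⟫ / lam) := by
      funext v
      have hn : ‖v - c‖ ^ 2 = ‖v‖ ^ 2 - 2 * ⟪v, c⟫ + ‖c‖ ^ 2 := by
        rw [← real_inner_self_eq_norm_sq, ← real_inner_self_eq_norm_sq,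
          ← real_inner_self_eq_norm_sq]
        simp only [inner_sub_left, inner_sub_right, real_inner_comm c v]
        ring
      simp only [hgdef, hσdef, hn]
      field_simp
      ring
    rw [heq]
    exact (hΓμ k hk).add haff
  have hkey := strong_min_aux hσ0 hgconv (hxs k) (hmin k hk) u hu
  have hgx : g (x k) = m k := (hm k hk).symm
  have hΓu : Γ k u ≤ f u + h u := hΓφ k hk u hu
  have htk := ht k hk
  have hcoef : σ / 2 = 1 / (2 * (lam / (1 + lam * μ))) := by
    have h1 : 0 < 1 + lam * μ := by positivity
    rw [hσdef]
    field_simp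
    ring
  have hmain : m k + σ / 2 * ‖u - x k‖ ^ 2 ≤ f u + h u + ‖u - c‖ ^ 2 / (2 * lam) := by
    calc m k + σ / 2 * ‖u - x k‖ ^ 2 = g (x k) + σ / 2 * ‖u - x k‖ ^ 2 := by rw [hgx]
      _ ≤ g u := hkey
      _ ≤ f u + h u + ‖u - c‖ ^ 2 / (2 * lam) := by
          simp only [hgdef]; linarith
  rw [hcoef] at hmain
  have hfinal : 1 / (2 * (lam / (1 + lam * μ))) * ‖u - x k‖ ^ 2
      = ‖x k - u‖ ^ 2 / (2 * (lam / (1 + lam * μ))) := by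
    rw [norm_sub_rev]; ring
  rw [hfinal] at hmain
  have hrev : ‖c - u‖ ^ 2 = ‖u - c‖ ^ 2 := by rw [norm_sub_rev]
  rw [hrev]
  linarith
end

section
/- For every u ∈ s and every integer K ≥ 1 with K ≥ min{ ‖x̂_0 − u‖²/(λε), (1/(μλ_μ))·log(μ‖x̂_0 − u‖²/ε + 1) } (where λ_μ := λ/(1 + λμ) and, for μ = 0, the second term of the minimum is interpreted as the first), one has min_{1 ≤ k ≤ K} ( φ(ŷ_k) − φ(u) ) ≤ ε. -/
/-!
The objective `Γ_k + ‖· - x_{k-1}‖² / (2λ)` is `(μ + 1/λ)`-strongly convex and minimized at `x_k`,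
so `m_k + (μ + 1/λ)/2 ‖u - x_k‖² ≤ φ u + ‖u - x_{k-1}‖² / (2λ)`. If `φ (y_k) - φ u > ε` for all
`k ≤ K`, this and `φ (y_k) - m_k ≤ ε/2` give `(1 + λμ) ‖x_k - u‖² + λε < ‖x_{k-1} - u‖²`.
Telescoping yields `Kλε < ‖x_0 - u‖²`; for `μ > 0` the quantity `(1 + λμ)^k (‖x_k - u‖² + ε/μ)`
decreases strictly, and `log (1 + λμ) ≥ λμ / (1 + λμ)` turns this into the logarithmic bound.
-/

open Filter Topology Finset

theorem StrongConvexOn.add_sq_norm_sub_le_of_isMinOn {E : Type*} [NormedAddCommGroup E]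
    [NormedSpace ℝ E] {s : Set E} {m : ℝ} {f : E → ℝ} (hf : StrongConvexOn s m f) {x u : E}
    (hx : x ∈ s) (hu : u ∈ s) (hmin : IsMinOn f s x) :
    f x + m / 2 * ‖u - x‖ ^ 2 ≤ f u := by
  have key : ∀ t ∈ Set.Ioo (0 : ℝ) 1, m / 2 * ‖u - x‖ ^ 2 * (1 - t) ≤ f u - f x := by
    rintro t ⟨ht0, ht1⟩
    have hconv := hf.2 hx hu (sub_nonneg.2 ht1.le) ht0.le (sub_add_cancel 1 t)
    have hle : f x ≤ f ((1 - t) • x + t • u) :=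
      hmin (hf.1 hx hu (sub_nonneg.2 ht1.le) ht0.le (sub_add_cancel 1 t))
    rw [norm_sub_rev, smul_eq_mul, smul_eq_mul] at hconv
    refine le_of_mul_le_mul_left ?_ ht0
    linarith
  have hlim : Tendsto (fun t : ℝ => m / 2 * ‖u - x‖ ^ 2 * (1 - t)) (𝓝[>] 0)
      (𝓝 (m / 2 * ‖u - x‖ ^ 2)) :=
    tendsto_nhdsWithin_of_tendsto_nhds <| (by fun_prop : Continuous fun t : ℝ =>
      m / 2 * ‖u - x‖ ^ 2 * (1 - t)).tendsto' 0 _ (by simp)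
  linarith [le_of_tendsto hlim (eventually_of_mem (Ioo_mem_nhdsGT one_pos) key)]

theorem StrongConvexOn.add_norm_sub_sq_div {E : Type*} [NormedAddCommGroup E]
    [InnerProductSpace ℝ E] {s : Set E} {m : ℝ} {f : E → ℝ} (hf : StrongConvexOn s m f)
    (z : E) (lam : ℝ) :
    StrongConvexOn s (m + 1 / lam) fun u => f u + ‖u - z‖ ^ 2 / (2 * lam) := by
  rw [strongConvexOn_iff_convex] at hf ⊢
  have haff : ConvexOn ℝ s fun u => -(lam⁻¹ • innerₛₗ ℝ z) u + ‖z‖ ^ 2 / (2 * lam) :=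
    ((-(lam⁻¹ • innerₛₗ ℝ z)).convexOn hf.1).add_const _
  refine (hf.add haff).congr fun u _ => ?_
  simp only [Pi.add_apply, LinearMap.smul_apply, innerₛₗ_apply_apply, smul_eq_mul,
    norm_sub_sq_real, real_inner_comm z u]
  ring

theorem StrongConvexOn.prox_three_point {E : Type*} [NormedAddCommGroup E]
    [InnerProductSpace ℝ E] {s : Set E} {μ lam : ℝ} {Γ : E → ℝ} (hΓ : StrongConvexOn s μ Γ)
    (hlam : 0 < lam) {z x u : E} (hx : x ∈ s) (hu : u ∈ s)
    (hmin : IsMinOn (fun v => Γ v + ‖v - z‖ ^ 2 / (2 * lam)) s x) :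
    2 * lam * (Γ x + ‖x - z‖ ^ 2 / (2 * lam)) + (1 + lam * μ) * ‖x - u‖ ^ 2
      ≤ 2 * lam * Γ u + ‖z - u‖ ^ 2 := by
  have hgrowth := (hΓ.add_norm_sub_sq_div z lam).add_sq_norm_sub_le_of_isMinOn hx hu hmin
  rw [norm_sub_rev u, norm_sub_rev u] at hgrowth
  calc _ = 2 * lam * (Γ x + ‖x - z‖ ^ 2 / (2 * lam) + (μ + 1 / lam) / 2 * ‖x - u‖ ^ 2) := by
        field_simp; ring
    _ ≤ 2 * lam * (Γ u + ‖z - u‖ ^ 2 / (2 * lam)) := by gcongr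
    _ = _ := by field_simp

theorem sum_lt_sub_of_forall_add_lt {d c : ℕ → ℝ} {K : ℕ} (hK : 0 < K)
    (h : ∀ k < K, d (k + 1) + c k < d k) : ∑ k ∈ range K, c k < d 0 - d K := by
  rw [← sum_range_sub']
  exact sum_lt_sum_of_nonempty (nonempty_range_iff.2 hK.ne') fun k hk =>
    lt_sub_iff_add_lt'.2 (h k (mem_range.1 hk))

theorem lt_div_of_forall_mul_add_lt {d : ℕ → ℝ} {q c : ℝ} {K : ℕ} (hK : 0 < K) (hq : 1 ≤ q)
    (hc : 0 < c) (hd : ∀ k, 0 ≤ d k) (h : ∀ k < K, q * d (k + 1) + c < d k) :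
    (K : ℝ) < d 0 / c := by
  have hsum := sum_lt_sub_of_forall_add_lt (d := d) (c := fun _ => c) hK fun k hk => by
    nlinarith [h k hk, hd (k + 1)]
  rw [sum_const, card_range, nsmul_eq_mul] at hsum
  rw [lt_div_iff₀ hc]
  linarith [hd K]

theorem lt_log_of_forall_mul_add_lt {d : ℕ → ℝ} {lam μ ε : ℝ} {K : ℕ} (hK : 0 < K)
    (hlam : 0 < lam) (hμ : 0 < μ) (hε : 0 < ε) (hd : ∀ k, 0 ≤ d k)
    (h : ∀ k < K, (1 + lam * μ) * d (k + 1) + lam * ε < d k) :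
    (K : ℝ) < 1 / (μ * (lam / (1 + lam * μ))) * Real.log (μ * d 0 / ε + 1) := by
  set q := 1 + lam * μ
  have hq : 0 < q := by positivity
  have hshift : q * (ε / μ) = ε / μ + lam * ε := by field_simp; ring
  have hsum := sum_lt_sub_of_forall_add_lt (d := fun k => q ^ k * (d k + ε / μ))
    (c := fun _ => 0) hK fun k hk => by
      have := mul_lt_mul_of_pos_left (h k hk) (pow_pos hq k)
      rw [add_zero, pow_succ, mul_assoc, mul_add q, hshift]
      linarith
  simp only [sum_const_zero, pow_zero, one_mul, sub_pos] at hsum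
  have hpow : q ^ K < μ * d 0 / ε + 1 := by
    refine lt_of_mul_lt_mul_right (a := ε / μ) ?_ (by positivity)
    calc q ^ K * (ε / μ) ≤ q ^ K * (d K + ε / μ) := by gcongr; linarith [hd K]
      _ < d 0 + ε / μ := hsum
      _ = (μ * d 0 / ε + 1) * (ε / μ) := by field_simp
  have hlog : K * Real.log q < Real.log (μ * d 0 / ε + 1) := by
    rw [← Real.log_pow]
    exact Real.log_lt_log (by positivity) hpow
  have hlog_q : μ * (lam / q) ≤ Real.log q :=
    calc μ * (lam / q) = 1 - q⁻¹ := by field_simp; ring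
      _ ≤ Real.log q := Real.one_sub_inv_le_log_of_pos hq
  rw [one_div_mul_eq_div, lt_div_iff₀ (by positivity)]
  nlinarith [mul_le_mul_of_nonneg_left hlog_q K.cast_nonneg]

theorem stmt2_general {E : Type*} [NormedAddCommGroup E] [InnerProductSpace ℝ E]
    (s : Set E)
    (f h : E → ℝ)
    (μ : ℝ) (hμ : 0 ≤ μ)
    (lam ε : ℝ) (hlam : 0 < lam) (hε : 0 < ε)
    (x y : ℕ → E) (m : ℕ → ℝ) (Γ : ℕ → E → ℝ)
    (hxs : ∀ k, x k ∈ s)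
    (hΓμ : ∀ k, 1 ≤ k → ConvexOn ℝ s (fun u => Γ k u - μ / 2 * ‖u‖ ^ 2))
    (hΓφ : ∀ k, 1 ≤ k → ∀ u ∈ s, Γ k u ≤ f u + h u)
    (hmin : ∀ k, 1 ≤ k →
      IsMinOn (fun u => Γ k u + ‖u - x (k - 1)‖ ^ 2 / (2 * lam)) s (x k))
    (hm : ∀ k, 1 ≤ k → m k = Γ k (x k) + ‖x k - x (k - 1)‖ ^ 2 / (2 * lam))
    (ht : ∀ k, 1 ≤ k → (f (y k) + h (y k)) - m k ≤ ε / 2) :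
    ∀ u ∈ s, ∀ K : ℕ, 1 ≤ K →
      (K : ℝ) ≥
        (if μ = 0 then ‖x 0 - u‖ ^ 2 / (lam * ε)
         else min (‖x 0 - u‖ ^ 2 / (lam * ε))
           (1 / (μ * (lam / (1 + lam * μ))) *
             Real.log (μ * ‖x 0 - u‖ ^ 2 / ε + 1))) →
      ∃ k : ℕ, 1 ≤ k ∧ k ≤ K ∧ (f (y k) + h (y k)) - (f u + h u) ≤ ε := by
  intro u hu K hK hKb
  by_contra! hgap
  have hdecr : ∀ k < K,
      (1 + lam * μ) * ‖x (k + 1) - u‖ ^ 2 + lam * ε < ‖x k - u‖ ^ 2 := by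
    intro k hk
    have hprox := (strongConvexOn_iff_convex.2 (hΓμ (k + 1) k.succ_pos)).prox_three_point hlam
      (hxs (k + 1)) hu (hmin (k + 1) k.succ_pos)
    have hmk := hm (k + 1) k.succ_pos
    rw [Nat.add_sub_cancel] at hprox hmk
    rw [← hmk] at hprox
    have hm_gap : f u + h u + ε / 2 < m (k + 1) := by
      linarith [ht (k + 1) k.succ_pos, hgap (k + 1) k.succ_pos hk]
    have h2lam : 0 < 2 * lam := by positivity
    linarith [mul_lt_mul_of_pos_left hm_gap h2lam,
      mul_le_mul_of_nonneg_left (hΓφ (k + 1) k.succ_pos u hu) h2lam.le]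
  have hd : ∀ k, 0 ≤ ‖x k - u‖ ^ 2 := fun _ => sq_nonneg _
  have hlin := lt_div_of_forall_mul_add_lt hK (le_add_of_nonneg_right (by positivity))
    (mul_pos hlam hε) hd hdecr
  refine hKb.not_gt ?_
  split_ifs with hμ0
  · exact hlin
  · exact lt_min hlin
      (lt_log_of_forall_mul_add_lt hK hlam (hμ.lt_of_ne' hμ0) hε hd hdecr)

theorem stmt2 {E : Type*} [NormedAddCommGroup E] [InnerProductSpace ℝ E]
    (s : Set E) (hs : s.Nonempty) (hsconv : Convex ℝ s)
    (f h : E → ℝ) (hf : ConvexOn ℝ s f) (hh : ConvexOn ℝ s h)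
    (μ : ℝ) (hμ : 0 ≤ μ)
    (hhμ : ConvexOn ℝ s (fun z => h z - μ / 2 * ‖z‖ ^ 2))
    (lam ε : ℝ) (hlam : 0 < lam) (hε : 0 < ε)
    (x y : ℕ → E) (m : ℕ → ℝ) (Γ : ℕ → E → ℝ)
    (hxs : ∀ k, x k ∈ s) (hys : ∀ k, y k ∈ s)
    (hΓμ : ∀ k, 1 ≤ k → ConvexOn ℝ s (fun u => Γ k u - μ / 2 * ‖u‖ ^ 2))
    (hΓφ : ∀ k, 1 ≤ k → ∀ u ∈ s, Γ k u ≤ f u + h u)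
    (hmin : ∀ k, 1 ≤ k →
      IsMinOn (fun u => Γ k u + ‖u - x (k - 1)‖ ^ 2 / (2 * lam)) s (x k))
    (hm : ∀ k, 1 ≤ k → m k = Γ k (x k) + ‖x k - x (k - 1)‖ ^ 2 / (2 * lam))
    (ht : ∀ k, 1 ≤ k → (f (y k) + h (y k)) - m k ≤ ε / 2) :
    ∀ u ∈ s, ∀ K : ℕ, 1 ≤ K →
      (K : ℝ) ≥
        (if μ = 0 then ‖x 0 - u‖ ^ 2 / (lam * ε)
         else min (‖x 0 - u‖ ^ 2 / (lam * ε))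
           (1 / (μ * (lam / (1 + lam * μ))) *
             Real.log (μ * ‖x 0 - u‖ ^ 2 / ε + 1))) →
      ∃ k : ℕ, 1 ≤ k ∧ k ≤ K ∧ (f (y k) + h (y k)) - (f u + h u) ≤ ε :=
  stmt2_general s f h μ hμ lam ε hlam hε x y m Γ hxs hΓμ hΓφ hmin hm ht
end

section
/- If K ≥ 1 is the first index such that φ(ŷ_K) − φ(x*) ≤ ε, then K ≤ min{ d₀²/(λε), (1/(μλ_μ))·log(μd₀²/ε + 1) } + 1, where λ_μ := λ/(1 + λμ) and, for μ = 0, the second term of the minimum is interpreted as the first. Moreover, ‖x̂_k − x*‖ ≤ √2·d₀ for every k ∈ {0, 1, …, K − 1}. -/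
open scoped RealInnerProductSpace

lemma norm_combo {E : Type*} [NormedAddCommGroup E] [InnerProductSpace ℝ E]
    (x u : E) (a b : ℝ) (hab : a + b = 1) :
    ‖a•x + b•u‖^2 = a*‖x‖^2 + b*‖u‖^2 - a*b*‖x-u‖^2 := by
  have hb : b = 1 - a := by linarith
  subst hb
  simp only [← real_inner_self_eq_norm_sq]
  simp only [inner_add_left, inner_add_right, inner_sub_left, inner_sub_right,
    real_inner_smul_left, real_inner_smul_right, real_inner_comm x u]
  ring

lemma strong_min {E : Type*} [NormedAddCommGroup E] [InnerProductSpace ℝ E]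
    {s : Set E} {Φ : E → ℝ} {c : ℝ} (hc : 0 ≤ c)
    (hΦ : ConvexOn ℝ s (fun u => Φ u - c * ‖u‖^2)) {x : E} (hx : x ∈ s)
    (hmin : IsMinOn Φ s x) : ∀ u ∈ s, Φ x + c * ‖u - x‖^2 ≤ Φ u := by
  intro u hu
  have key : ∀ t : ℝ, 0 < t → t < 1 → Φ x + c * (1 - t) * ‖u - x‖^2 ≤ Φ u := by
    intro t ht0 ht1
    have hab : (1 - t) + t = 1 := by ring
    have hmem : (1-t)•x + t•u ∈ s := hΦ.1 hx hu (by linarith) (le_of_lt ht0) hab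
    have h1 : Φ x ≤ Φ ((1-t)•x + t•u) := hmin hmem
    have h2 := hΦ.2 hx hu (show (0:ℝ) ≤ 1 - t by linarith) (le_of_lt ht0) hab
    simp only [smul_eq_mul] at h2
    have h3 : ‖(1-t)•x + t•u‖^2 = (1-t)*‖x‖^2 + t*‖u‖^2 - (1-t)*t*‖x-u‖^2 :=
      norm_combo x u (1-t) t hab
    have h4 : ‖x - u‖ = ‖u - x‖ := norm_sub_rev x u
    rw [h4] at h3
    nlinarith [h1, h2, h3]
  by_contra hcon
  push_neg at hcon
  set A := c * ‖u - x‖^2 with hA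
  have hA0 : 0 ≤ A := by positivity
  have hδ : 0 < Φ x + A - Φ u := by linarith
  set δ := Φ x + A - Φ u with hδdef
  have hApos : 0 < A := by
    by_contra hA1
    push_neg at hA1
    have := key (1/2) (by norm_num) (by norm_num)
    nlinarith
  set t := min (1/2) (δ / (2 * A)) with htdef
  have ht0 : 0 < t := lt_min (by norm_num) (by positivity)
  have ht1 : t < 1 := lt_of_le_of_lt (min_le_left _ _) (by norm_num)
  have hk := key t ht0 ht1
  have htA : t * A ≤ δ / 2 := by
    have : t ≤ δ / (2 * A) := min_le_right _ _
    calc t * A ≤ (δ / (2*A)) * A := by nlinarith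
    _ = δ / 2 := by field_simp
  nlinarith [hk]

lemma affine_cvx {E : Type*} [NormedAddCommGroup E] [InnerProductSpace ℝ E]
    {s : Set E} (hs : Convex ℝ s) (p : E) (r : ℝ) :
    ConvexOn ℝ s (fun u => (‖p‖^2 - 2*⟪u, p⟫) * r) := by
  refine ⟨hs, fun u hu v hv a b ha hb hab => ?_⟩
  simp only [inner_add_left, real_inner_smul_left, smul_eq_mul]
  apply le_of_eq
  linear_combination (-(‖p‖^2 * r)) * hab

theorem stmt4 {E : Type*} [NormedAddCommGroup E] [InnerProductSpace ℝ E]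
    (s : Set E) (hs : s.Nonempty) (hsconv : Convex ℝ s)
    (f h : E → ℝ) (hf : ConvexOn ℝ s f) (hh : ConvexOn ℝ s h)
    (xstar : E) (hxstar : xstar ∈ s)
    (hstar : ∀ u ∈ s, f xstar + h xstar ≤ f u + h u)
    (μ : ℝ) (hμ : 0 ≤ μ)
    (hhμ : ConvexOn ℝ s (fun z => h z - μ / 2 * ‖z‖ ^ 2))
    (lam ε : ℝ) (hlam : 0 < lam) (hε : 0 < ε)
    (x y : ℕ → E) (m : ℕ → ℝ) (Γ : ℕ → E → ℝ)
    (hxs : ∀ k, x k ∈ s) (hys : ∀ k, y k ∈ s)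
    (hΓμ : ∀ k, 1 ≤ k → ConvexOn ℝ s (fun u => Γ k u - μ / 2 * ‖u‖ ^ 2))
    (hΓφ : ∀ k, 1 ≤ k → ∀ u ∈ s, Γ k u ≤ f u + h u)
    (hmin : ∀ k, 1 ≤ k →
      IsMinOn (fun u => Γ k u + ‖u - x (k - 1)‖ ^ 2 / (2 * lam)) s (x k))
    (hm : ∀ k, 1 ≤ k → m k = Γ k (x k) + ‖x k - x (k - 1)‖ ^ 2 / (2 * lam))
    (ht : ∀ k, 1 ≤ k → (f (y k) + h (y k)) - m k ≤ ε / 2)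
    (K : ℕ) (hK1 : 1 ≤ K)
    (hKgood : (f (y K) + h (y K)) - (f xstar + h xstar) ≤ ε)
    (hKfirst : ∀ k : ℕ, 1 ≤ k → k < K →
      ε < (f (y k) + h (y k)) - (f xstar + h xstar)) :
    (K : ℝ) ≤
      (if μ = 0 then ‖x 0 - xstar‖ ^ 2 / (lam * ε)
       else min (‖x 0 - xstar‖ ^ 2 / (lam * ε))
         (1 / (μ * (lam / (1 + lam * μ))) *
           Real.log (μ * ‖x 0 - xstar‖ ^ 2 / ε + 1))) + 1 ∧
    ∀ k : ℕ, k < K → ‖x k - xstar‖ ≤ Real.sqrt 2 * ‖x 0 - xstar‖ := by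
  have hlam' : lam ≠ 0 := hlam.ne'
  -- the key one-step recursion
  have hstep : ∀ k : ℕ, 1 ≤ k → k < K →
      lam * ε + (lam * μ + 1) * ‖x k - xstar‖^2 ≤ ‖x (k-1) - xstar‖^2 := by
    intro k hk1 hkK
    have hcvx : ConvexOn ℝ s (fun u =>
        (Γ k u + ‖u - x (k-1)‖^2 / (2*lam)) - (μ/2 + 1/(2*lam)) * ‖u‖^2) := by
      have heq : (fun u => (Γ k u + ‖u - x (k-1)‖^2 / (2*lam)) - (μ/2 + 1/(2*lam)) * ‖u‖^2)
          = fun u => (Γ k u - μ/2 * ‖u‖^2) + ((‖x (k-1)‖^2 - 2*⟪u, x (k-1)⟫) * (1/(2*lam))) := by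
        funext u
        rw [norm_sub_sq_real]
        field_simp
        ring
      rw [heq]
      exact (hΓμ k hk1).add (affine_cvx hsconv _ _)
    have hsm := strong_min (c := μ/2 + 1/(2*lam)) (by positivity) hcvx (hxs k)
      (hmin k hk1) xstar hxstar
    rw [norm_sub_rev xstar (x k)] at hsm
    have h1 : Γ k xstar ≤ f xstar + h xstar := hΓφ k hk1 xstar hxstar
    have h2 : f (y k) + h (y k) - m k ≤ ε/2 := ht k hk1
    have h3 : ε < f (y k) + h (y k) - (f xstar + h xstar) := hKfirst k hk1 hkK
    have hmk := hm k hk1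
    have h4 : (μ/2 + 1/(2*lam)) * ‖x k - xstar‖^2 + ε/2
        ≤ ‖xstar - x (k-1)‖^2 / (2*lam) := by linarith
    have h5 := mul_le_mul_of_nonneg_left h4 (show (0:ℝ) ≤ 2*lam by positivity)
    have e1 : 2*lam * ((μ/2 + 1/(2*lam)) * ‖x k - xstar‖^2 + ε/2)
        = (lam*μ + 1) * ‖x k - xstar‖^2 + lam*ε := by field_simp
    have e2 : 2*lam * (‖xstar - x (k-1)‖^2 / (2*lam)) = ‖xstar - x (k-1)‖^2 := by
      field_simp
    rw [e1, e2, norm_sub_rev xstar (x (k-1))] at h5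
    linarith
  have hlamμ : 0 ≤ lam * μ := mul_nonneg hlam.le hμ
  -- linear decrease
  have hlin : ∀ j : ℕ, j < K → ‖x j - xstar‖^2 + j * (lam*ε) ≤ ‖x 0 - xstar‖^2 := by
    intro j
    induction j with
    | zero => intro _; simp
    | succ n ih =>
      intro hjK
      have hs1 := hstep (n+1) (by omega) hjK
      simp only [Nat.add_sub_cancel] at hs1
      have ihn := ih (by omega)
      have hD : 0 ≤ ‖x (n+1) - xstar‖^2 := by positivity
      push_cast
      nlinarith [hs1, ihn, hD]
  -- bound 1: K - 1 ≤ D0/(lam ε)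
  obtain ⟨Kp, rfl⟩ : ∃ Kp, K = Kp + 1 := ⟨K - 1, by omega⟩
  have hKpK : Kp < Kp + 1 := by omega
  have hDKp : 0 ≤ ‖x Kp - xstar‖^2 := by positivity
  have hbound1 : (Kp : ℝ) ≤ ‖x 0 - xstar‖^2 / (lam * ε) := by
    rw [le_div_iff₀ (by positivity)]
    have := hlin Kp hKpK
    nlinarith
  constructor
  · by_cases hμ0 : μ = 0
    · rw [if_pos hμ0]
      push_cast
      linarith
    · rw [if_neg hμ0]
      have hμpos : 0 < μ := lt_of_le_of_ne hμ (Ne.symm hμ0)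
      have hP : (1:ℝ) < 1 + lam*μ := by nlinarith
      have hP0 : (0:ℝ) < 1 + lam*μ := by linarith
      -- geometric decrease
      have hgeom : ∀ j : ℕ, j < Kp + 1 →
          (1 + lam*μ)^j * (‖x j - xstar‖^2 + ε/μ) ≤ ‖x 0 - xstar‖^2 + ε/μ := by
        intro j
        induction j with
        | zero => intro _; simp
        | succ n ih =>
          intro hjK
          have hs1 := hstep (n+1) (by omega) hjK
          simp only [Nat.add_sub_cancel] at hs1
          have ihn := ih (by omega)
          have hone : (1 + lam*μ) * (‖x (n+1) - xstar‖^2 + ε/μ)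
              ≤ ‖x n - xstar‖^2 + ε/μ := by
            have : lam*μ * (ε/μ) = lam*ε := by field_simp
            nlinarith [hs1]
          have hpow : (0:ℝ) ≤ (1 + lam*μ)^n := by positivity
          calc (1 + lam*μ)^(n+1) * (‖x (n+1) - xstar‖^2 + ε/μ)
              = (1 + lam*μ)^n * ((1 + lam*μ) * (‖x (n+1) - xstar‖^2 + ε/μ)) := by ring
            _ ≤ (1 + lam*μ)^n * (‖x n - xstar‖^2 + ε/μ) :=
                mul_le_mul_of_nonneg_left hone hpow
            _ ≤ ‖x 0 - xstar‖^2 + ε/μ := ihn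
      have hgKp := hgeom Kp hKpK
      have hεμ : 0 < ε/μ := by positivity
      have hpowle : (1 + lam*μ)^Kp ≤ μ * ‖x 0 - xstar‖^2 / ε + 1 := by
        have hpow : (0:ℝ) ≤ (1 + lam*μ)^Kp := by positivity
        have h6 : (1 + lam*μ)^Kp * (ε/μ) ≤ ‖x 0 - xstar‖^2 + ε/μ := by
          nlinarith [hgKp]
        have e6 : μ * ‖x 0 - xstar‖^2 / ε + 1 = (‖x 0 - xstar‖^2 + ε/μ) / (ε/μ) := by
          field_simp
        rw [e6, le_div_iff₀ hεμ]
        exact h6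
      have hL0 : 0 ≤ Real.log (μ * ‖x 0 - xstar‖^2 / ε + 1) := by
        apply Real.log_nonneg
        have : 0 ≤ μ * ‖x 0 - xstar‖^2 / ε := by positivity
        linarith
      have hlog : (Kp:ℝ) * Real.log (1 + lam*μ)
          ≤ Real.log (μ * ‖x 0 - xstar‖^2 / ε + 1) := by
        rw [← Real.log_pow]
        exact Real.log_le_log (by positivity) hpowle
      have hlb : lam*μ/(1 + lam*μ) ≤ Real.log (1 + lam*μ) := by
        have h7 := Real.log_le_sub_one_of_pos (show 0 < (1 + lam*μ)⁻¹ by positivity)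
        rw [Real.log_inv] at h7
        have e3 : 1 - (1 + lam*μ)⁻¹ = lam*μ/(1 + lam*μ) := by field_simp; ring
        linarith [h7, e3]
      have hc1 : (Kp:ℝ) * (lam*μ) ≤ (1 + lam*μ) * Real.log (μ * ‖x 0 - xstar‖^2 / ε + 1) := by
        have e4 : (Kp:ℝ) * (lam*μ) = ((Kp:ℝ) * (lam*μ/(1 + lam*μ))) * (1 + lam*μ) := by
          field_simp
        rw [e4]
        have h8 : (Kp:ℝ) * (lam*μ/(1 + lam*μ)) ≤ (Kp:ℝ) * Real.log (1 + lam*μ) :=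
          mul_le_mul_of_nonneg_left hlb (Nat.cast_nonneg Kp)
        calc ((Kp:ℝ) * (lam*μ/(1 + lam*μ))) * (1 + lam*μ)
            ≤ ((Kp:ℝ) * Real.log (1 + lam*μ)) * (1 + lam*μ) :=
              mul_le_mul_of_nonneg_right h8 hP0.le
          _ ≤ Real.log (μ * ‖x 0 - xstar‖^2 / ε + 1) * (1 + lam*μ) :=
              mul_le_mul_of_nonneg_right hlog hP0.le
          _ = (1 + lam*μ) * Real.log (μ * ‖x 0 - xstar‖^2 / ε + 1) := by ring
      have hbound2 : (Kp:ℝ) ≤ 1 / (μ * (lam / (1 + lam * μ))) *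
          Real.log (μ * ‖x 0 - xstar‖^2 / ε + 1) := by
        have e5 : 1 / (μ * (lam / (1 + lam * μ))) = (1 + lam*μ)/(lam*μ) := by
          rw [show μ * (lam / (1 + lam*μ)) = (lam*μ)/(1 + lam*μ) by ring, one_div_div]
        rw [e5, div_mul_eq_mul_div, le_div_iff₀ (by positivity)]
        linarith [hc1]
      push_cast
      have := le_min hbound1 hbound2
      linarith
  · intro k hk
    have hDk : ‖x k - xstar‖^2 ≤ ‖x 0 - xstar‖^2 := by
      have h0 := hlin k hk
      have hk0 : (0:ℝ) ≤ (k:ℝ) * (lam*ε) := by positivity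
      linarith
    have h9 : ‖x k - xstar‖ ≤ ‖x 0 - xstar‖ := by
      have := Real.sqrt_le_sqrt hDk
      rwa [Real.sqrt_sq (norm_nonneg _), Real.sqrt_sq (norm_nonneg _)] at this
    have h10 : (1:ℝ) ≤ Real.sqrt 2 := by
      rw [show (1:ℝ) = Real.sqrt 1 by simp]
      exact Real.sqrt_le_sqrt (by norm_num)
    calc ‖x k - xstar‖ ≤ ‖x 0 - xstar‖ := h9
      _ = 1 * ‖x 0 - xstar‖ := by ring
      _ ≤ Real.sqrt 2 * ‖x 0 - xstar‖ :=
          mul_le_mul_of_nonneg_right h10 (norm_nonneg _)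
end

section
/- Suppose τ ∈ (0,1) satisfies τ/(1 − τ) ≥ λ_μ·(L + 8M²/ε), where λ_μ := λ/(1 + λμ). Let x^c ∈ s and suppose: Γ̄ : E → ℝ is μ-convex on s with Γ̄ ≤ φ on s; x_j minimizes u ↦ Γ̄(u) + ‖u − x^c‖²/(2λ) over s; m_j := Γ̄(x_j) + ‖x_j − x^c‖²/(2λ); Γ⁺ : E → ℝ satisfies Γ⁺ ≥ τΓ̄ + (1−τ)(ℓ_f(·; x_j) + h) on s; and x_{j+1} ∈ s with m_{j+1} := Γ⁺(x_{j+1}) + ‖x_{j+1} − x^c‖²/(2λ). Then m_{j+1} ≥ τ·m_j + (1−τ)·[ ℓ_f(x_{j+1}; x_j) + h(x_{j+1}) + ‖x_{j+1} − x^c‖²/(2λ) + (L/2 + 4M²/ε)·‖x_{j+1} − x_j‖² ]. -/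
open scoped RealInnerProductSpace

set_option maxHeartbeats 1000000 in
theorem stmt5 {E : Type*} [NormedAddCommGroup E] [InnerProductSpace ℝ E]
    (s : Set E) (hs : s.Nonempty) (hsconv : Convex ℝ s)
    (f h : E → ℝ) (hf : ConvexOn ℝ s f) (hh : ConvexOn ℝ s h)
    (f' : E → E)
    (hsub : ∀ x ∈ s, ∀ u ∈ s, f x + ⟪f' x, u - x⟫ ≤ f u)
    (μ : ℝ) (hμ : 0 ≤ μ)
    (hhμ : ConvexOn ℝ s (fun z => h z - μ / 2 * ‖z‖ ^ 2))
    (lam ε : ℝ) (hlam : 0 < lam) (hε : 0 < ε)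
    (M L : ℝ) (hM : 0 ≤ M) (hL : 0 ≤ L)
    (τ : ℝ) (hτ : τ ∈ Set.Ioo (0 : ℝ) 1)
    (hτge : τ / (1 - τ) ≥ (lam / (1 + lam * μ)) * (L + 8 * M ^ 2 / ε))
    (xc : E) (hxc : xc ∈ s)
    (Γbar : E → ℝ)
    (hΓbarμ : ConvexOn ℝ s (fun u => Γbar u - μ / 2 * ‖u‖ ^ 2))
    (hΓbarφ : ∀ u ∈ s, Γbar u ≤ f u + h u)
    (xj : E) (hxjs : xj ∈ s)
    (hxjmin : IsMinOn (fun u => Γbar u + ‖u - xc‖ ^ 2 / (2 * lam)) s xj)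
    (mj : ℝ) (hmj : mj = Γbar xj + ‖xj - xc‖ ^ 2 / (2 * lam))
    (Γplus : E → ℝ)
    (hΓplus : ∀ u ∈ s,
      τ * Γbar u + (1 - τ) * (f xj + ⟪f' xj, u - xj⟫ + h u) ≤ Γplus u)
    (xj1 : E) (hxj1s : xj1 ∈ s)
    (mj1 : ℝ) (hmj1 : mj1 = Γplus xj1 + ‖xj1 - xc‖ ^ 2 / (2 * lam)) :
    mj1 ≥ τ * mj + (1 - τ) *
      (f xj + ⟪f' xj, xj1 - xj⟫ + h xj1 + ‖xj1 - xc‖ ^ 2 / (2 * lam) +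
        (L / 2 + 4 * M ^ 2 / ε) * ‖xj1 - xj‖ ^ 2) := by
  obtain ⟨hτ0, hτ1⟩ := hτ
  set c : ℝ := (1 + lam * μ) / (2 * lam) with hc
  have hdenpos : (0 : ℝ) < 1 + lam * μ := by nlinarith
  have hcpos : 0 < c := div_pos hdenpos (by linarith)
  set ψ : E → ℝ := fun u => Γbar u + ‖u - xc‖ ^ 2 / (2 * lam) with hψ
  -- the function ψ u - c‖u‖² is convex on s
  have hgconv : ConvexOn ℝ s (fun u => ψ u - c * ‖u‖ ^ 2) := by
    have haff : ConvexOn ℝ s (fun u => (-⟪u, xc⟫ + ‖xc‖ ^ 2 / 2) / lam) := by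
      refine ⟨hsconv, fun x hx y hy a b ha hb hab => le_of_eq ?_⟩
      simp only [inner_add_left, real_inner_smul_left, smul_eq_mul]
      field_simp
      linear_combination (-(‖xc‖ ^ 2)) * hab
    have heq : (fun u => ψ u - c * ‖u‖ ^ 2)
        = fun u => (Γbar u - μ / 2 * ‖u‖ ^ 2) + ((-⟪u, xc⟫ + ‖xc‖ ^ 2 / 2) / lam) := by
      funext u
      simp only [hψ, hc]
      rw [norm_sub_sq_real]
      field_simp
      ring
    rw [heq]
    exact hΓbarμ.add haff
  -- growth estimate: ψ u ≥ ψ xj + c‖u - xj‖² for u ∈ s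
  have growth : ∀ u ∈ s, ψ xj + c * ‖u - xj‖ ^ 2 ≤ ψ u := by
    intro u hu
    have step : ∀ a : ℝ, 0 < a → a < 1 → ψ xj + c * a * ‖u - xj‖ ^ 2 ≤ ψ u := by
      intro a ha0 ha1
      have hb0 : (0 : ℝ) < 1 - a := by linarith
      have hab : a + (1 - a) = 1 := by ring
      have hzs : a • xj + (1 - a) • u ∈ s := hsconv hxjs hu ha0.le hb0.le hab
      have hnormid : ‖a • xj + (1 - a) • u‖ ^ 2
          = a * ‖xj‖ ^ 2 + (1 - a) * ‖u‖ ^ 2 - a * (1 - a) * ‖xj - u‖ ^ 2 := by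
        rw [norm_add_sq_real, norm_sub_sq_real, norm_smul, norm_smul,
          real_inner_smul_left, real_inner_smul_right,
          Real.norm_of_nonneg ha0.le, Real.norm_of_nonneg hb0.le, mul_pow, mul_pow]
        ring
      have hconv := hgconv.2 hxjs hu ha0.le hb0.le hab
      simp only [smul_eq_mul] at hconv
      have hmin : ψ xj ≤ ψ (a • xj + (1 - a) • u) := hxjmin hzs
      have hψz : ψ (a • xj + (1 - a) • u)
          = (fun u => ψ u - c * ‖u‖ ^ 2) (a • xj + (1 - a) • u)
            + c * ‖a • xj + (1 - a) • u‖ ^ 2 := by ring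
      have hkey : ψ xj ≤ a * ψ xj + (1 - a) * ψ u - c * a * (1 - a) * ‖xj - u‖ ^ 2 := by
        rw [hψz] at hmin
        calc ψ xj ≤ (fun u => ψ u - c * ‖u‖ ^ 2) (a • xj + (1 - a) • u)
              + c * ‖a • xj + (1 - a) • u‖ ^ 2 := hmin
          _ ≤ a * (ψ xj - c * ‖xj‖ ^ 2) + (1 - a) * (ψ u - c * ‖u‖ ^ 2)
              + c * ‖a • xj + (1 - a) • u‖ ^ 2 := by linarith [hconv]
          _ = a * ψ xj + (1 - a) * ψ u - c * a * (1 - a) * ‖xj - u‖ ^ 2 := by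
              rw [hnormid]; ring
      have hnorm : ‖u - xj‖ = ‖xj - u‖ := norm_sub_rev _ _
      rw [hnorm]
      have h2 : (1 - a) * (ψ xj + c * a * ‖xj - u‖ ^ 2) ≤ (1 - a) * ψ u := by nlinarith [hkey]
      exact le_of_mul_le_mul_left h2 hb0
    by_contra hcon
    push_neg at hcon
    rcases eq_or_lt_of_le (sq_nonneg ‖u - xj‖) with hd0 | hdpos
    · have hstep := step (1/2) (by norm_num) (by norm_num)
      rw [← hd0] at hcon hstep
      simp at hcon hstep
      linarith
    · set r : ℝ := (ψ u - ψ xj) / (c * ‖u - xj‖ ^ 2) with hr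
      have hden : 0 < c * ‖u - xj‖ ^ 2 := by positivity
      have hr1 : r < 1 := by
        rw [hr, div_lt_one hden]; linarith
      have hmax1 : max r (1/2) < 1 := max_lt hr1 (by norm_num)
      set a : ℝ := (max r (1/2) + 1) / 2 with ha
      have ha0 : 0 < a := by
        have := le_max_right r (1/2); rw [ha]; linarith
      have ha1 : a < 1 := by rw [ha]; linarith
      have hstep := step a ha0 ha1
      have hra : r < a := by
        have := le_max_left r (1/2); rw [ha]; linarith
      have hlt : ψ u - ψ xj < a * (c * ‖u - xj‖ ^ 2) := by
        rw [hr, div_lt_iff₀ hden] at hra; linarith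
      nlinarith [hstep, hlt]
  -- combine
  have hG := hΓplus xj1 hxj1s
  have hgrow := growth xj1 hxj1s
  simp only [hψ] at hgrow
  have h1τ : 0 < 1 - τ := by linarith
  have hτc : (1 - τ) * (L / 2 + 4 * M ^ 2 / ε) ≤ τ * c := by
    rw [ge_iff_le, le_div_iff₀ h1τ] at hτge
    have h2 : lam * ((L + 8 * M ^ 2 / ε) * (1 - τ)) ≤ τ * (1 + lam * μ) := by
      rw [div_mul_eq_mul_div, div_mul_eq_mul_div, div_le_iff₀ hdenpos] at hτge
      linarith
    calc (1 - τ) * (L / 2 + 4 * M ^ 2 / ε)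
        = lam * ((L + 8 * M ^ 2 / ε) * (1 - τ)) / (2 * lam) := by
          field_simp; ring
      _ ≤ τ * (1 + lam * μ) / (2 * lam) :=
          (div_le_div_iff_of_pos_right (by linarith)).mpr h2
      _ = τ * c := by rw [hc]; ring
  have hτcd : (1 - τ) * ((L / 2 + 4 * M ^ 2 / ε) * ‖xj1 - xj‖ ^ 2)
      ≤ τ * (c * ‖xj1 - xj‖ ^ 2) := by nlinarith [sq_nonneg ‖xj1 - xj‖, hτc]
  have hgrow2 : τ * (Γbar xj + ‖xj - xc‖ ^ 2 / (2 * lam) + c * ‖xj1 - xj‖ ^ 2)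
      ≤ τ * (Γbar xj1 + ‖xj1 - xc‖ ^ 2 / (2 * lam)) :=
    mul_le_mul_of_nonneg_left hgrow hτ0.le
  rw [hmj1, hmj]
  nlinarith [hG, hgrow2, hτcd]
end

section
/- Assume the (M,L)-hybrid condition and suppose τ ∈ (0,1) satisfies τ/(1 − τ) ≥ λ_μ·(L + 8M²/ε), where λ_μ := λ/(1 + λμ). Let x^c ∈ s and suppose: Γ̄ : E → ℝ is μ-convex on s with Γ̄ ≤ φ on s; x_j minimizes u ↦ Γ̄(u) + ‖u − x^c‖²/(2λ) over s; m_j := Γ̄(x_j) + ‖x_j − x^c‖²/(2λ); Γ⁺ : E → ℝ satisfies Γ⁺ ≥ τΓ̄ + (1−τ)(ℓ_f(·; x_j) + h) on s; x_{j+1} minimizes u ↦ Γ⁺(u) + ‖u − x^c‖²/(2λ) over s with value m_{j+1}; y_j ∈ s with t_j := φ(y_j) + ‖y_j − x^c‖²/(2λ) − m_j; and y_{j+1} ∈ s satisfies φ(y_{j+1}) + ‖y_{j+1} − x^c‖²/(2λ) ≤ min{ φ(x_{j+1}) + ‖x_{j+1} − x^c‖²/(2λ), φ(y_j) + ‖y_j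 − x^c‖²/(2λ) }, with t_{j+1} := φ(y_{j+1}) + ‖y_{j+1} − x^c‖²/(2λ) − m_{j+1}. Then t_{j+1} − ε/4 ≤ τ·(t_j − ε/4). -/
open scoped RealInnerProductSpace

lemma sum_range_add_one (n : ℕ) :
    ∑ k ∈ Finset.range n, ((k : ℝ) + 1) = n * (n + 1) / 2 := by
  induction n with
  | zero => simp
  | succ m ih => rw [Finset.sum_range_succ, ih]; push_cast; ring

lemma lemA {E : Type*} [NormedAddCommGroup E] [InnerProductSpace ℝ E]
    {s : Set E} (hsconv : Convex ℝ s) {f : E → ℝ} {f' : E → E}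
    (hsub : ∀ x ∈ s, ∀ u ∈ s, f x + ⟪f' x, u - x⟫ ≤ f u)
    {M L : ℝ} (hM : 0 ≤ M) (hL : 0 ≤ L)
    (hhyb : ∀ u ∈ s, ∀ v ∈ s, ‖f' u - f' v‖ ≤ 2 * M + L * ‖u - v‖)
    {x u : E} (hx : x ∈ s) (hu : u ∈ s) :
    f u ≤ f x + ⟪f' x, u - x⟫ + 2 * M * ‖u - x‖ + L / 2 * ‖u - x‖ ^ 2 := by
  set d := ‖u - x‖ with hd
  have hd0 : 0 ≤ d := norm_nonneg _
  refine le_of_forall_pos_le_add fun η hη => ?_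
  obtain ⟨N, hN⟩ := exists_nat_gt (L * d ^ 2 / (2 * η))
  have hN0 : (0:ℝ) ≤ (N:ℝ) := Nat.cast_nonneg N
  set nr : ℝ := (N : ℝ) + 1 with hnr
  have hnr1 : (1 : ℝ) ≤ nr := by rw [hnr]; linarith
  have hnr0 : (0 : ℝ) < nr := by linarith
  set z : ℕ → E := fun k => x + ((k : ℝ) / nr) • (u - x) with hz
  have hzmem : ∀ k ≤ N + 1, z k ∈ s := by
    intro k hk
    have h1 : (0 : ℝ) ≤ (k : ℝ) / nr := by positivity
    have h2 : (k : ℝ) / nr ≤ 1 := by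
      rw [div_le_one hnr0]
      have : (k : ℝ) ≤ (N : ℝ) + 1 := by exact_mod_cast hk
      linarith
    have hmem := hsconv hx hu (by linarith : (0:ℝ) ≤ 1 - (k:ℝ)/nr) h1 (by ring)
    have : (1 - (k:ℝ)/nr) • x + ((k:ℝ)/nr) • u = z k := by
      simp only [hz]; module
    rwa [this] at hmem
  have hstep : ∀ k < N + 1,
      f (z (k + 1)) - f (z k)
        ≤ (⟪f' x, u - x⟫ + 2 * M * d + L * d ^ 2 * (((k : ℝ) + 1) / nr)) / nr := by
    intro k hk
    have hzk := hzmem k (le_of_lt hk)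
    have hzk1 := hzmem (k + 1) hk
    have hsub' := hsub (z (k+1)) hzk1 (z k) hzk
    have hdiff : z k - z (k+1) = -((1 / nr) • (u - x)) := by
      simp only [hz]; push_cast; match_scalars <;> field_simp <;> ring
    have hstep1 : f (z (k+1)) - f (z k) ≤ ⟪f' (z (k+1)), (1 / nr) • (u - x)⟫ := by
      rw [hdiff, inner_neg_right] at hsub'
      linarith
    have hinner : ⟪f' (z (k+1)), (1 / nr) • (u - x)⟫
        = (⟪f' x, u - x⟫ + ⟪f' (z (k+1)) - f' x, u - x⟫) / nr := by
      rw [real_inner_smul_right, inner_sub_left]; ring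
    have hnormz : ‖z (k+1) - x‖ = (((k:ℝ)+1) / nr) * d := by
      have : z (k+1) - x = (((k:ℝ)+1) / nr) • (u - x) := by
        simp only [hz]; push_cast; module
      rw [this, norm_smul, Real.norm_eq_abs, abs_of_nonneg (by positivity)]
    have hib : ⟪f' (z (k+1)) - f' x, u - x⟫ ≤ (2 * M + L * ((((k:ℝ)+1) / nr) * d)) * d := by
      calc ⟪f' (z (k+1)) - f' x, u - x⟫ ≤ ‖f' (z (k+1)) - f' x‖ * ‖u - x‖ :=
            real_inner_le_norm _ _
        _ ≤ (2 * M + L * ‖z (k+1) - x‖) * d := by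
            apply mul_le_mul_of_nonneg_right (hhyb _ hzk1 _ hx) hd0
        _ = (2 * M + L * ((((k:ℝ)+1) / nr) * d)) * d := by rw [hnormz]
    rw [hinner] at hstep1
    calc f (z (k+1)) - f (z k)
        ≤ (⟪f' x, u - x⟫ + (2 * M + L * ((((k:ℝ)+1) / nr) * d)) * d) / nr := by
          apply hstep1.trans
          gcongr
      _ = (⟪f' x, u - x⟫ + 2 * M * d + L * d ^ 2 * (((k : ℝ) + 1) / nr)) / nr := by
          ring
  -- telescope
  have htel : f u - f x = ∑ k ∈ Finset.range (N + 1), (f (z (k+1)) - f (z k)) := by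
    rw [Finset.sum_range_sub (fun k => f (z k))]
    have hz0 : z 0 = x := by simp [hz]
    have hzn : z (N + 1) = u := by
      simp only [hz]
      have : ((N:ℝ) + 1) / nr = 1 := by rw [hnr]; field_simp
      push_cast
      rw [this, one_smul]
      abel
    rw [hz0, hzn]
  have hsumle : ∑ k ∈ Finset.range (N + 1), (f (z (k+1)) - f (z k))
      ≤ ∑ k ∈ Finset.range (N + 1),
          (⟪f' x, u - x⟫ + 2 * M * d + L * d ^ 2 * (((k : ℝ) + 1) / nr)) / nr :=
    Finset.sum_le_sum fun k hk => hstep k (Finset.mem_range.mp hk)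
  have hsumeq : ∑ k ∈ Finset.range (N + 1),
      (⟪f' x, u - x⟫ + 2 * M * d + L * d ^ 2 * (((k : ℝ) + 1) / nr)) / nr
      = ⟪f' x, u - x⟫ + 2 * M * d + L * d ^ 2 * ((nr + 1) / (2 * nr)) := by
    have expand : ∀ k ∈ Finset.range (N + 1),
        (⟪f' x, u - x⟫ + 2 * M * d + L * d ^ 2 * (((k : ℝ) + 1) / nr)) / nr
          = (⟪f' x, u - x⟫ + 2 * M * d) / nr + (L * d ^ 2 / nr ^ 2) * ((k:ℝ) + 1) := by
      intro k _; field_simp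
    rw [Finset.sum_congr rfl expand, Finset.sum_add_distrib, Finset.sum_const,
      ← Finset.mul_sum, sum_range_add_one]
    simp only [Finset.card_range, nsmul_eq_mul]
    push_cast
    rw [← hnr]
    field_simp
  have hfin : L * d ^ 2 * ((nr + 1) / (2 * nr)) ≤ L / 2 * d ^ 2 + η := by
    have h1 : L * d ^ 2 * ((nr + 1) / (2 * nr)) = L / 2 * d ^ 2 + L * d ^ 2 / (2 * nr) := by
      field_simp
    have h2 : L * d ^ 2 / (2 * nr) ≤ η := by
      rw [div_le_iff₀ (by linarith)]
      have := (div_lt_iff₀ (by linarith : (0:ℝ) < 2 * η)).mp hN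
      nlinarith
    linarith
  linarith [htel.le.trans (hsumle.trans_eq hsumeq)]
lemma norm_combo_sq {E : Type*} [NormedAddCommGroup E] [InnerProductSpace ℝ E]
    (a b : E) (t : ℝ) :
    ‖(1 - t) • a + t • b‖ ^ 2
      = (1 - t) * ‖a‖ ^ 2 + t * ‖b‖ ^ 2 - t * (1 - t) * ‖a - b‖ ^ 2 := by
  simp only [← real_inner_self_eq_norm_sq, inner_add_left, inner_add_right,
    inner_sub_left, inner_sub_right, real_inner_smul_left, real_inner_smul_right]
  rw [real_inner_comm b a]
  ring

lemma lemB {E : Type*} [NormedAddCommGroup E] [InnerProductSpace ℝ E]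
    {s : Set E} (hsconv : Convex ℝ s) {Γbar : E → ℝ} {μ lam : ℝ}
    (hμ : 0 ≤ μ) (hlam : 0 < lam) (xc : E)
    (hΓbarμ : ConvexOn ℝ s (fun u => Γbar u - μ / 2 * ‖u‖ ^ 2))
    {xj : E} (hxjs : xj ∈ s)
    (hxjmin : IsMinOn (fun u => Γbar u + ‖u - xc‖ ^ 2 / (2 * lam)) s xj)
    {u : E} (hus : u ∈ s) :
    Γbar xj + ‖xj - xc‖ ^ 2 / (2 * lam) + (1 + lam * μ) / (2 * lam) * ‖u - xj‖ ^ 2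
      ≤ Γbar u + ‖u - xc‖ ^ 2 / (2 * lam) := by
  have hc : (1 + lam * μ) / (2 * lam) = (μ + 1/lam) / 2 := by field_simp; ring
  rw [hc]
  set σ : ℝ := μ + 1 / lam with hσ
  have hσ0 : 0 < σ := by positivity
  clear_value σ
  have hQ0 : (0:ℝ) ≤ ‖u - xj‖ ^ 2 := sq_nonneg _
  have key : ∀ t : ℝ, 0 < t → t ≤ 1 / 2 →
      Γbar xj + ‖xj - xc‖ ^ 2 / (2 * lam) + σ / 2 * (1 - t) * ‖u - xj‖ ^ 2
        ≤ Γbar u + ‖u - xc‖ ^ 2 / (2 * lam) := by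
    intro t ht0 ht1
    have ht0' : (0:ℝ) ≤ t := le_of_lt ht0
    have ht1' : (0:ℝ) ≤ 1 - t := by linarith
    have hxts : (1 - t) • xj + t • u ∈ s := hsconv hxjs hus ht1' ht0' (by ring)
    have hconv : Γbar ((1 - t) • xj + t • u) - μ/2 * ‖(1 - t) • xj + t • u‖^2
        ≤ (1-t) * (Γbar xj - μ/2 * ‖xj‖^2) + t * (Γbar u - μ/2 * ‖u‖^2) := by
      have := hΓbarμ.2 hxjs hus ht1' ht0' (by ring : (1-t) + t = 1)
      simpa using this
    have hn1 := norm_combo_sq xj u t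
    have hn2 : ‖((1 - t) • xj + t • u) - xc‖ ^ 2
        = (1 - t) * ‖xj - xc‖ ^ 2 + t * ‖u - xc‖ ^ 2 - t * (1 - t) * ‖xj - u‖ ^ 2 := by
      have h1 : ((1 - t) • xj + t • u) - xc = (1 - t) • (xj - xc) + t • (u - xc) := by
        module
      have h2 : (xj - xc) - (u - xc) = xj - u := by abel
      rw [h1, norm_combo_sq, h2]
    have hmin := isMinOn_iff.mp hxjmin _ hxts
    have hns : ‖xj - u‖ ^ 2 = ‖u - xj‖ ^ 2 := by rw [norm_sub_rev]
    rw [hns] at hn1 hn2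
    rw [hn1] at hconv
    rw [hn2] at hmin
    -- hmin : Γbar xj + Pxj ≤ Γbar xt + ((1-t)Pxj' + t Pu' - t(1-t)Q)/(2 lam)
    have hΓxt : Γbar ((1 - t) • xj + t • u)
        ≤ (1-t) * Γbar xj + t * Γbar u - μ/2 * (t * (1-t) * ‖u - xj‖^2) := by
      linarith
    have hmin2 : Γbar xj + ‖xj - xc‖ ^ 2 / (2 * lam)
        ≤ Γbar ((1 - t) • xj + t • u)
          + ((1-t) * ‖xj - xc‖^2 / (2*lam) + t * ‖u - xc‖^2 / (2*lam)
              - (t * (1-t) * ‖u - xj‖^2) / (2*lam)) := by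
      have e : ((1 - t) * ‖xj - xc‖ ^ 2 + t * ‖u - xc‖ ^ 2 - t * (1 - t) * ‖u - xj‖ ^ 2) / (2*lam)
          = (1-t) * ‖xj - xc‖^2 / (2*lam) + t * ‖u - xc‖^2 / (2*lam)
              - (t * (1-t) * ‖u - xj‖^2) / (2*lam) := by ring
      linarith [hmin, e.le, e.ge]
    have hσe : σ / 2 * (1 - t) * ‖u - xj‖ ^ 2
        = μ/2 * ((1-t) * ‖u - xj‖^2) + ((1-t) * ‖u - xj‖^2) / (2*lam) := by
      rw [hσ]; field_simp
    rw [← mul_le_mul_iff_right₀ ht0]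
    have hσe2 : t * (σ / 2 * (1 - t) * ‖u - xj‖ ^ 2)
        = μ/2 * (t * (1-t) * ‖u - xj‖^2) + (t * (1-t) * ‖u - xj‖^2) / (2*lam) := by
      rw [hσ]; field_simp
    ring_nf at hΓxt hmin2 hσe2 ⊢
    linarith [hΓxt, hmin2, hσe2]
  refine le_of_forall_pos_le_add fun η hη => ?_
  set t : ℝ := min (1/2) (η / (σ * ‖u - xj‖ ^ 2 + 1)) with hts
  have hden : (0:ℝ) < σ * ‖u - xj‖ ^ 2 + 1 := by positivity
  have ht0 : 0 < t := lt_min (by norm_num) (by positivity)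
  have ht1 : t ≤ 1/2 := min_le_left _ _
  have h1 : t ≤ η / (σ * ‖u - xj‖ ^ 2 + 1) := min_le_right _ _
  clear_value t
  have hkey := key t ht0 ht1
  have hsmall : σ / 2 * t * ‖u - xj‖ ^ 2 ≤ η := by
    have h2 : t * (σ * ‖u - xj‖ ^ 2 + 1) ≤ η := by
      rw [← le_div_iff₀ hden]; exact h1
    nlinarith [ht0]
  linarith [hkey, hsmall]

theorem stmt6 {E : Type*} [NormedAddCommGroup E] [InnerProductSpace ℝ E]
    (s : Set E) (hs : s.Nonempty) (hsconv : Convex ℝ s)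
    (f h : E → ℝ) (hf : ConvexOn ℝ s f) (hh : ConvexOn ℝ s h)
    (f' : E → E)
    (hsub : ∀ x ∈ s, ∀ u ∈ s, f x + ⟪f' x, u - x⟫ ≤ f u)
    (M L : ℝ) (hM : 0 ≤ M) (hL : 0 ≤ L)
    (hhyb : ∀ u ∈ s, ∀ v ∈ s, ‖f' u - f' v‖ ≤ 2 * M + L * ‖u - v‖)
    (μ : ℝ) (hμ : 0 ≤ μ)
    (hhμ : ConvexOn ℝ s (fun z => h z - μ / 2 * ‖z‖ ^ 2))
    (lam ε : ℝ) (hlam : 0 < lam) (hε : 0 < ε)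
    (τ : ℝ) (hτ : τ ∈ Set.Ioo (0 : ℝ) 1)
    (hτge : τ / (1 - τ) ≥ (lam / (1 + lam * μ)) * (L + 8 * M ^ 2 / ε))
    (xc : E) (hxc : xc ∈ s)
    (Γbar : E → ℝ)
    (hΓbarμ : ConvexOn ℝ s (fun u => Γbar u - μ / 2 * ‖u‖ ^ 2))
    (hΓbarφ : ∀ u ∈ s, Γbar u ≤ f u + h u)
    (xj : E) (hxjs : xj ∈ s)
    (hxjmin : IsMinOn (fun u => Γbar u + ‖u - xc‖ ^ 2 / (2 * lam)) s xj)
    (mj : ℝ) (hmj : mj = Γbar xj + ‖xj - xc‖ ^ 2 / (2 * lam))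
    (Γplus : E → ℝ)
    (hΓplus : ∀ u ∈ s,
      τ * Γbar u + (1 - τ) * (f xj + ⟪f' xj, u - xj⟫ + h u) ≤ Γplus u)
    (xj1 : E) (hxj1s : xj1 ∈ s)
    (hxj1min : IsMinOn (fun u => Γplus u + ‖u - xc‖ ^ 2 / (2 * lam)) s xj1)
    (mj1 : ℝ) (hmj1 : mj1 = Γplus xj1 + ‖xj1 - xc‖ ^ 2 / (2 * lam))
    (yj : E) (hyjs : yj ∈ s)
    (tj : ℝ) (htj : tj = f yj + h yj + ‖yj - xc‖ ^ 2 / (2 * lam) - mj)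
    (yj1 : E) (hyj1s : yj1 ∈ s)
    (hyj1 : f yj1 + h yj1 + ‖yj1 - xc‖ ^ 2 / (2 * lam) ≤
      min (f xj1 + h xj1 + ‖xj1 - xc‖ ^ 2 / (2 * lam))
          (f yj + h yj + ‖yj - xc‖ ^ 2 / (2 * lam)))
    (tj1 : ℝ) (htj1 : tj1 = f yj1 + h yj1 + ‖yj1 - xc‖ ^ 2 / (2 * lam) - mj1) :
    tj1 - ε / 4 ≤ τ * (tj - ε / 4) := by
  obtain ⟨hτ0, hτ1⟩ := hτ
  have hA : (0:ℝ) < 1 - τ := by linarith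
  have hB : (0:ℝ) < 1 + lam * μ := by positivity
  set dd : ℝ := ‖xj1 - xj‖ with hdd
  have hdd0 : 0 ≤ dd := norm_nonneg _
  -- curvature bound
  have k5 : f xj1 ≤ f xj + ⟪f' xj, xj1 - xj⟫ + 2 * M * dd + L / 2 * dd ^ 2 :=
    lemA hsconv hsub hM hL hhyb hxjs hxj1s
  -- quadratic growth
  have k4 : mj + (1 + lam * μ) / (2 * lam) * dd ^ 2
      ≤ Γbar xj1 + ‖xj1 - xc‖ ^ 2 / (2 * lam) := by
    have := lemB hsconv hμ hlam xc hΓbarμ hxjs hxjmin hxj1s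
    rw [hmj]
    exact this
  have k3 := hΓplus xj1 hxj1s
  obtain ⟨k1, k2⟩ := le_min_iff.mp hyj1
  -- product facts
  have p1 : τ * (f yj1 + h yj1 + ‖yj1 - xc‖ ^ 2 / (2 * lam))
      ≤ τ * (f yj + h yj + ‖yj - xc‖ ^ 2 / (2 * lam)) :=
    mul_le_mul_of_nonneg_left k2 hτ0.le
  have p2 : (1 - τ) * (f yj1 + h yj1 + ‖yj1 - xc‖ ^ 2 / (2 * lam))
      ≤ (1 - τ) * (f xj1 + h xj1 + ‖xj1 - xc‖ ^ 2 / (2 * lam)) :=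
    mul_le_mul_of_nonneg_left k1 hA.le
  have p3 : τ * (mj + (1 + lam * μ) / (2 * lam) * dd ^ 2)
      ≤ τ * (Γbar xj1 + ‖xj1 - xc‖ ^ 2 / (2 * lam)) :=
    mul_le_mul_of_nonneg_left k4 hτ0.le
  have p4 : (1 - τ) * (f xj1)
      ≤ (1 - τ) * (f xj + ⟪f' xj, xj1 - xj⟫ + 2 * M * dd + L / 2 * dd ^ 2) :=
    mul_le_mul_of_nonneg_left k5 hA.le
  -- the key parameter inequality, cleared of denominators
  have h2 : (1 - τ) * (lam * (L * ε + 8 * M ^ 2)) ≤ τ * ((1 + lam * μ) * ε) := by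
    have h1 : lam / (1 + lam * μ) * (L + 8 * M ^ 2 / ε) * (1 - τ) ≤ τ :=
      (le_div_iff₀ hA).mp hτge
    have e : lam / (1 + lam * μ) * (L + 8 * M ^ 2 / ε) * (1 - τ)
        = ((1 - τ) * (lam * (L * ε + 8 * M ^ 2))) / ((1 + lam * μ) * ε) := by
      field_simp
    rw [e] at h1
    exact (div_le_iff₀ (by positivity)).mp h1
  have k14 : (1 - τ) * (2 * M * dd + L / 2 * dd ^ 2)
      ≤ (1 - τ) * (ε / 4) + τ * ((1 + lam * μ) / (2 * lam)) * dd ^ 2 := by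
    apply le_of_mul_le_mul_left ?_ (show (0:ℝ) < 2 * lam * ε by positivity)
    have e2 : 2 * lam * ε * ((1 - τ) * (ε / 4) + τ * ((1 + lam * μ) / (2 * lam)) * dd ^ 2)
        = 2 * lam * ε * ((1 - τ) * (ε / 4)) + ε * τ * (1 + lam * μ) * dd ^ 2 := by
      field_simp
    rw [e2]
    have H1 := mul_le_mul_of_nonneg_right h2 (sq_nonneg dd)
    have H2 := mul_nonneg (mul_nonneg hA.le hlam.le) (sq_nonneg (ε - 4 * M * dd))
    ring_nf at H1 H2 ⊢
    linarith [H1, H2]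
  -- final linear combination
  have htjτ : τ * tj = τ * (f yj + h yj + ‖yj - xc‖ ^ 2 / (2 * lam) - mj) := by
    rw [htj]
  clear_value dd
  ring_nf at p1 p2 p3 p4 k3 k14 htjτ htj1 hmj1 ⊢
  linarith only [p1, p2, p3, p4, k3, k14, htjτ, htj1, hmj1]
end

section
/- Let x₀c ∈ s with ‖x₀c − x*‖ ≤ √2·d₀, let Γ : E → ℝ be μ-convex on s with Γ ≤ φ on s and Γ ≥ ℓ_f(·; x₀c) + h on s, let x⁺ minimize u ↦ Γ(u) + ‖u − x₀c‖²/(2λ) over s with minimum value m, and let y ∈ s satisfy φ(y) + ‖y − x₀c‖²/(2λ) ≤ φ(x⁺) + ‖x⁺ − x₀c‖²/(2λ). Then t := φ(y) + ‖y − x₀c‖²/(2λ) − m satisfies t ≤ M² + 4(L + 2)·( max{1, 2λL}·d₀ + λM )². -/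
open scoped RealInnerProductSpace

private lemma limit_aux (X Y C : ℝ) (h : ∀ τ : ℝ, 0 < τ → τ ≤ 1 → X ≤ Y + τ * C) : X ≤ Y := by
  rcases le_or_gt C 0 with hC | hC
  · have h1 := h 1 one_pos le_rfl
    linarith
  · by_contra hXY
    push_neg at hXY
    have h1 : 0 < (X - Y) / (2 * C) := div_pos (by linarith) (by linarith)
    have h2 : 0 < min 1 ((X - Y) / (2 * C)) := lt_min one_pos h1
    have h3 := h _ h2 (min_le_left _ _)
    have h4 : min 1 ((X - Y) / (2 * C)) * C ≤ ((X - Y) / (2 * C)) * C :=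
      mul_le_mul_of_nonneg_right (min_le_right _ _) hC.le
    have h5 : ((X - Y) / (2 * C)) * C = (X - Y) / 2 := by field_simp
    linarith

private lemma sq_le_aux (a b : ℝ) (ha : 0 ≤ a) (hb : 0 ≤ b) (h : a ^ 2 ≤ b ^ 2) : a ≤ b := by
  nlinarith

set_option maxHeartbeats 1000000 in
theorem stmt7 {E : Type*} [NormedAddCommGroup E] [InnerProductSpace ℝ E]
    [FiniteDimensional ℝ E]
    (s : Set E) (hs : s.Nonempty) (hscl : IsClosed s) (hsconv : Convex ℝ s)
    (f h : E → ℝ) (hf : ConvexOn ℝ s f) (hh : ConvexOn ℝ s h)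
    (hfc : ContinuousOn f s) (hhc : ContinuousOn h s)
    (xstar : E) (hxstar : xstar ∈ s)
    (hstar : ∀ u ∈ s, f xstar + h xstar ≤ f u + h u)
    (d0 : ℝ) (hd0 : 0 ≤ d0)
    (f' : E → E)
    (hsub : ∀ x ∈ s, ∀ u ∈ s, f x + ⟪f' x, u - x⟫ ≤ f u)
    (M L : ℝ) (hM : 0 ≤ M) (hL : 0 ≤ L)
    (hhyb : ∀ u ∈ s, ∀ v ∈ s, ‖f' u - f' v‖ ≤ 2 * M + L * ‖u - v‖)
    (μ : ℝ) (hμ : 0 ≤ μ)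
    (hhμ : ConvexOn ℝ s (fun z => h z - μ / 2 * ‖z‖ ^ 2))
    (lam : ℝ) (hlam : 0 < lam)
    (x0c : E) (hx0cs : x0c ∈ s) (hx0c : ‖x0c - xstar‖ ≤ Real.sqrt 2 * d0)
    (Γ : E → ℝ)
    (hΓμ : ConvexOn ℝ s (fun u => Γ u - μ / 2 * ‖u‖ ^ 2))
    (hΓφ : ∀ u ∈ s, Γ u ≤ f u + h u)
    (hΓℓ : ∀ u ∈ s, f x0c + ⟪f' x0c, u - x0c⟫ + h u ≤ Γ u)
    (xp : E) (hxps : xp ∈ s)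
    (hxpmin : IsMinOn (fun u => Γ u + ‖u - x0c‖ ^ 2 / (2 * lam)) s xp)
    (m : ℝ) (hm : m = Γ xp + ‖xp - x0c‖ ^ 2 / (2 * lam))
    (y : E) (hys : y ∈ s)
    (hy : f y + h y + ‖y - x0c‖ ^ 2 / (2 * lam) ≤
      f xp + h xp + ‖xp - x0c‖ ^ 2 / (2 * lam)) :
    f y + h y + ‖y - x0c‖ ^ 2 / (2 * lam) - m ≤
      M ^ 2 + 4 * (L + 2) * (max 1 (2 * lam * L) * d0 + lam * M) ^ 2 := by
  subst hm
  have hlam0 : lam ≠ 0 := ne_of_gt hlam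
  have hl2 : (0:ℝ) ≤ 2 * lam := by linarith
  have hclear : ∀ X : ℝ, 2 * lam * (X / (2 * lam)) = X := fun X => by field_simp
  -- Γ is convex on s
  have hsqconv : ConvexOn ℝ s (fun z : E => μ / 2 * ‖z‖ ^ 2) := by
    refine ⟨hsconv, fun x hx y hy' a b ha hb hab => ?_⟩
    simp only [smul_eq_mul]
    have hn : ‖a • x + b • y‖ ≤ a * ‖x‖ + b * ‖y‖ := by
      refine (norm_add_le _ _).trans ?_
      rw [norm_smul, norm_smul, Real.norm_of_nonneg ha, Real.norm_of_nonneg hb]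
    have h2 : ‖a • x + b • y‖ ^ 2 ≤ (a * ‖x‖ + b * ‖y‖) ^ 2 :=
      pow_le_pow_left₀ (norm_nonneg _) hn 2
    have h3 : ‖a • x + b • y‖ ^ 2 ≤ a * ‖x‖ ^ 2 + b * ‖y‖ ^ 2 := by
      nlinarith [mul_nonneg (mul_nonneg ha hb) (sq_nonneg (‖x‖ - ‖y‖))]
    have h4 := mul_le_mul_of_nonneg_left h3 (by linarith : (0:ℝ) ≤ μ / 2)
    nlinarith [h4]
  have hΓconv : ConvexOn ℝ s Γ := by
    have h2 := hΓμ.add hsqconv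
    have h3 : ((fun u => Γ u - μ / 2 * ‖u‖ ^ 2) + fun z : E => μ / 2 * ‖z‖ ^ 2) = Γ := by
      funext u
      show Γ u - μ / 2 * ‖u‖ ^ 2 + μ / 2 * ‖u‖ ^ 2 = Γ u
      ring
    rwa [h3] at h2
  -- inner product identity
  have hinner : 2 * ⟪xp - x0c, xp - xstar⟫ =
      ‖xp - x0c‖ ^ 2 + ‖xp - xstar‖ ^ 2 - ‖x0c - xstar‖ ^ 2 := by
    have e : x0c - xstar = (xp - xstar) - (xp - x0c) := by abel
    have e2 : ‖x0c - xstar‖ ^ 2 =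
        ‖xp - xstar‖ ^ 2 - 2 * ⟪xp - xstar, xp - x0c⟫ + ‖xp - x0c‖ ^ 2 := by
      rw [e]; exact norm_sub_sq_real _ _
    have ecomm := real_inner_comm (xp - xstar) (xp - x0c)
    linear_combination e2 + 2 * ecomm
  -- Step 1: variational inequality at xstar
  have hS1 : 2 * lam * Γ xp ≤ 2 * lam * Γ xstar + 2 * ⟪xp - x0c, xstar - xp⟫ := by
    apply limit_aux _ _ (‖xstar - xp‖ ^ 2)
    intro τ hτ0 hτ1
    have hw : (1 - τ) • xp + τ • xstar ∈ s := hsconv hxps hxstar (by linarith) hτ0.le (by ring)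
    have hmin := isMinOn_iff.mp hxpmin _ hw
    have hmin2 : 2 * lam * Γ xp + ‖xp - x0c‖ ^ 2 ≤
        2 * lam * Γ ((1 - τ) • xp + τ • xstar) + ‖(1 - τ) • xp + τ • xstar - x0c‖ ^ 2 := by
      have hmm := mul_le_mul_of_nonneg_left hmin hl2
      rw [mul_add, mul_add, hclear, hclear] at hmm
      exact hmm
    have hexp : ‖(1 - τ) • xp + τ • xstar - x0c‖ ^ 2
        = ‖xp - x0c‖ ^ 2 + 2 * (τ * ⟪xp - x0c, xstar - xp⟫) + (τ * ‖xstar - xp‖) ^ 2 := by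
      have e : (1 - τ) • xp + τ • xstar - x0c = (xp - x0c) + τ • (xstar - xp) := by module
      rw [e, norm_add_sq_real, real_inner_smul_right, norm_smul, Real.norm_of_nonneg hτ0.le]
    rw [hexp] at hmin2
    have hconv2 := mul_le_mul_of_nonneg_left
      (hΓconv.2 hxps hxstar (by linarith : (0:ℝ) ≤ 1 - τ) hτ0.le (by ring)) hl2
    simp only [smul_eq_mul] at hconv2
    have h7 : τ * (2 * lam * Γ xp) ≤
        τ * (2 * lam * Γ xstar + 2 * ⟪xp - x0c, xstar - xp⟫ + τ * ‖xstar - xp‖ ^ 2) := by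
      linarith [hmin2, hconv2]
    have h8 := le_of_mul_le_mul_left h7 hτ0
    linarith
  -- Step 2+3: key distance inequality
  have hkey : ‖xp - x0c‖ ^ 2 + ‖xp - xstar‖ ^ 2 - ‖x0c - xstar‖ ^ 2 ≤
      2 * lam * ((2 * M + L * ‖x0c - xstar‖) * ‖x0c - xstar‖ +
        (2 * M + L * ‖x0c - xstar‖) * ‖xp - xstar‖) := by
    apply limit_aux _ _ (2 * lam * (L * ‖xp - xstar‖ ^ 2))
    intro τ hτ0 hτ1
    set z := (1 - τ) • xstar + τ • xp with hzdef
    have hzs : z ∈ s := hsconv hxstar hxps (by linarith) hτ0.le (by ring)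
    have hS2 : h xstar - h xp ≤ ⟪f' z, xp - xstar⟫ := by
      have h1 := hstar z hzs
      have h2 := hh.2 hxstar hxps (by linarith : (0:ℝ) ≤ 1 - τ) hτ0.le (by ring)
      simp only [smul_eq_mul] at h2
      rw [← hzdef] at h2
      have h3 := hsub z hzs xstar hxstar
      have h4 : ⟪f' z, xstar - z⟫ = -(τ * ⟪f' z, xp - xstar⟫) := by
        have e : xstar - z = -(τ • (xp - xstar)) := by rw [hzdef]; module
        rw [e, inner_neg_right, real_inner_smul_right]
      rw [h4] at h3
      have h7 : τ * (h xstar - h xp) ≤ τ * ⟪f' z, xp - xstar⟫ := by linarith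
      have h8 := le_of_mul_le_mul_left h7 hτ0
      linarith
    have hzdist : ‖x0c - z‖ ≤ ‖x0c - xstar‖ + τ * ‖xp - xstar‖ := by
      have e : x0c - z = (x0c - xstar) - τ • (xp - xstar) := by rw [hzdef]; module
      rw [e]
      refine (norm_sub_le _ _).trans ?_
      rw [norm_smul, Real.norm_of_nonneg hτ0.le]
    have hyb1 := hhyb x0c hx0cs z hzs
    have hCS1 : -((2 * M + L * (‖x0c - xstar‖ + τ * ‖xp - xstar‖)) * ‖xp - xstar‖)
        ≤ ⟪f' x0c, xp - xstar⟫ - ⟪f' z, xp - xstar⟫ := by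
      have h9 := abs_real_inner_le_norm (f' x0c - f' z) (xp - xstar)
      rw [inner_sub_left] at h9
      have h10 : ‖f' x0c - f' z‖ * ‖xp - xstar‖ ≤
          (2 * M + L * (‖x0c - xstar‖ + τ * ‖xp - xstar‖)) * ‖xp - xstar‖ := by
        apply mul_le_mul_of_nonneg_right _ (norm_nonneg _)
        refine hyb1.trans ?_
        have := mul_le_mul_of_nonneg_left hzdist hL
        linarith
      have h11 := neg_abs_le (⟪f' x0c, xp - xstar⟫ - ⟪f' z, xp - xstar⟫)
      linarith
    have hyb2 := hhyb x0c hx0cs xstar hxstar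
    have hCS2 : -((2 * M + L * ‖x0c - xstar‖) * ‖x0c - xstar‖)
        ≤ ⟪f' x0c, xstar - x0c⟫ - ⟪f' xstar, xstar - x0c⟫ := by
      have h9 := abs_real_inner_le_norm (f' x0c - f' xstar) (xstar - x0c)
      rw [inner_sub_left, norm_sub_rev xstar x0c] at h9
      have h10 : ‖f' x0c - f' xstar‖ * ‖x0c - xstar‖ ≤
          (2 * M + L * ‖x0c - xstar‖) * ‖x0c - xstar‖ :=
        mul_le_mul_of_nonneg_right hyb2 (norm_nonneg _)
      have h11 := neg_abs_le (⟪f' x0c, xstar - x0c⟫ - ⟪f' xstar, xstar - x0c⟫)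
      linarith
    have hdec1 : ⟪f' x0c, xp - x0c⟫ = ⟪f' x0c, xp - xstar⟫ + ⟪f' x0c, xstar - x0c⟫ := by
      rw [← inner_add_right]
      congr 1
      abel
    have hstar0 := hsub xstar hxstar x0c hx0cs
    have hflip : ⟪f' xstar, x0c - xstar⟫ = -⟪f' xstar, xstar - x0c⟫ := by
      rw [← inner_neg_right]
      congr 1
      abel
    rw [hflip] at hstar0
    have hgl := hΓℓ xp hxps
    rw [hdec1] at hgl
    have hgp := hΓφ xstar hxstar
    have hneg : ⟪xp - x0c, xstar - xp⟫ = -⟪xp - x0c, xp - xstar⟫ := by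
      rw [← inner_neg_right]
      congr 1
      abel
    rw [hneg] at hS1
    have m1 := mul_le_mul_of_nonneg_left hgl hl2
    have m2 := mul_le_mul_of_nonneg_left hgp hl2
    have m3 := mul_le_mul_of_nonneg_left hS2 hl2
    have m4 := mul_le_mul_of_nonneg_left hstar0 hl2
    have m5 := mul_le_mul_of_nonneg_left hCS1 hl2
    have m6 := mul_le_mul_of_nonneg_left hCS2 hl2
    linarith [hS1, m1, m2, m3, m4, m5, m6, hinner]
  -- Step 3 conclusion: distance bound
  have hK : (0:ℝ) ≤ lam * (2 * M + L * ‖x0c - xstar‖) :=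
    mul_nonneg hlam.le (by nlinarith [norm_nonneg (x0c - xstar), mul_nonneg hL (norm_nonneg (x0c - xstar))])
  have hr : ‖xp - x0c‖ ≤ ‖x0c - xstar‖ + lam * (2 * M + L * ‖x0c - xstar‖) := by
    apply sq_le_aux _ _ (norm_nonneg _) (add_nonneg (norm_nonneg _) hK)
    nlinarith [hkey, sq_nonneg (‖xp - xstar‖ - lam * (2 * M + L * ‖x0c - xstar‖))]
  -- Step 4: linearization error bound via midpoint
  have hmid : (1/2 : ℝ) • x0c + (1/2 : ℝ) • xp ∈ s :=
    hsconv hx0cs hxps (by norm_num) (by norm_num) (by norm_num)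
  have hq : f xp - f x0c - ⟪f' x0c, xp - x0c⟫ ≤
      2 * M * ‖xp - x0c‖ + 3/4 * (L * ‖xp - x0c‖ ^ 2) := by
    set z2 := (1/2 : ℝ) • x0c + (1/2 : ℝ) • xp with hz2
    have e1 : z2 - xp = -((1/2 : ℝ) • (xp - x0c)) := by rw [hz2]; module
    have e2 : x0c - z2 = -((1/2 : ℝ) • (xp - x0c)) := by rw [hz2]; module
    have e3 : z2 - x0c = (1/2 : ℝ) • (xp - x0c) := by rw [hz2]; module
    have h1 := hsub xp hxps z2 hmid
    have h2 := hsub z2 hmid x0c hx0cs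
    rw [e1, inner_neg_right, real_inner_smul_right] at h1
    rw [e2, inner_neg_right, real_inner_smul_right] at h2
    have hyb3 := hhyb xp hxps x0c hx0cs
    have hyb4 := hhyb z2 hmid x0c hx0cs
    have hz2n : ‖z2 - x0c‖ = 1/2 * ‖xp - x0c‖ := by
      rw [e3, norm_smul]
      norm_num
    have hCS3 : ⟪f' xp, xp - x0c⟫ - ⟪f' x0c, xp - x0c⟫ ≤
        (2 * M + L * ‖xp - x0c‖) * ‖xp - x0c‖ := by
      have h9 := abs_real_inner_le_norm (f' xp - f' x0c) (xp - x0c)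
      rw [inner_sub_left] at h9
      have h10 := mul_le_mul_of_nonneg_right hyb3 (norm_nonneg (xp - x0c))
      have h11 := le_abs_self (⟪f' xp, xp - x0c⟫ - ⟪f' x0c, xp - x0c⟫)
      linarith
    have hCS4 : ⟪f' z2, xp - x0c⟫ - ⟪f' x0c, xp - x0c⟫ ≤
        (2 * M + L * (1/2 * ‖xp - x0c‖)) * ‖xp - x0c‖ := by
      have h9 := abs_real_inner_le_norm (f' z2 - f' x0c) (xp - x0c)
      rw [inner_sub_left] at h9
      have h10 := mul_le_mul_of_nonneg_right hyb4 (norm_nonneg (xp - x0c))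
      rw [hz2n] at h10
      have h11 := le_abs_self (⟪f' z2, xp - x0c⟫ - ⟪f' x0c, xp - x0c⟫)
      linarith
    linarith [h1, h2, hCS3, hCS4]
  -- Step 5: gap reduces to linearization error
  have ht : f y + h y + ‖y - x0c‖ ^ 2 / (2 * lam) - (Γ xp + ‖xp - x0c‖ ^ 2 / (2 * lam))
      ≤ f xp - f x0c - ⟪f' x0c, xp - x0c⟫ := by
    have h1 := hΓℓ xp hxps
    linarith [hy]
  -- Step 6: final arithmetic
  obtain ⟨P, hPdef⟩ : ∃ P : ℝ, P = max 1 (2 * lam * L) * d0 + lam * M := ⟨_, rfl⟩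
  rw [← hPdef]
  have hc1 : (0:ℝ) ≤ max 1 (2 * lam * L) := le_trans zero_le_one (le_max_left _ _)
  have hP : 0 ≤ P := by
    rw [hPdef]
    exact add_nonneg (mul_nonneg hc1 hd0) (mul_nonneg hlam.le hM)
  have hsq2 : Real.sqrt 2 * Real.sqrt 2 = 2 := Real.mul_self_sqrt (by norm_num)
  have hs2nn : (0:ℝ) ≤ Real.sqrt 2 := Real.sqrt_nonneg 2
  have hs2le : Real.sqrt 2 ≤ 3/2 := by nlinarith
  have m1 : Real.sqrt 2 * ‖x0c - xstar‖ ≤ 2 * d0 := by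
    have h1 := mul_le_mul_of_nonneg_left hx0c hs2nn
    have h2 : Real.sqrt 2 * (Real.sqrt 2 * d0) = 2 * d0 := by rw [← mul_assoc, hsq2]
    linarith
  have hcmax : 2 * (1 + lam * L) ≤ 3 * max 1 (2 * lam * L) := by
    rcases le_total (2 * lam * L) 1 with hcase | hcase
    · rw [max_eq_left hcase]; linarith
    · rw [max_eq_right hcase]; linarith
  have hr2 : Real.sqrt 2 * ‖xp - x0c‖ ≤ 3 * P := by
    have h1 := mul_le_mul_of_nonneg_left hr hs2nn
    have h3 : lam * L * (Real.sqrt 2 * ‖x0c - xstar‖) ≤ lam * L * (2 * d0) :=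
      mul_le_mul_of_nonneg_left m1 (mul_nonneg hlam.le hL)
    have h4 : Real.sqrt 2 * (2 * lam * M) ≤ 3/2 * (2 * lam * M) :=
      mul_le_mul_of_nonneg_right hs2le (by positivity)
    have h5 := mul_le_mul_of_nonneg_right hcmax hd0
    rw [hPdef]
    nlinarith [h1, h3, h4, h5, m1]
  have hrr : 2 * ‖xp - x0c‖ ^ 2 ≤ 9 * P ^ 2 := by
    have h1 := mul_le_mul hr2 hr2 (by positivity) (by linarith [hP])
    have h2 : Real.sqrt 2 * ‖xp - x0c‖ * (Real.sqrt 2 * ‖xp - x0c‖) = 2 * ‖xp - x0c‖ ^ 2 := by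
      calc Real.sqrt 2 * ‖xp - x0c‖ * (Real.sqrt 2 * ‖xp - x0c‖)
          = Real.sqrt 2 * Real.sqrt 2 * (‖xp - x0c‖ * ‖xp - x0c‖) := by ring
        _ = 2 * ‖xp - x0c‖ ^ 2 := by rw [hsq2]; ring
    rw [h2] at h1
    linarith [h1]
  have hq2 := ht.trans hq
  have hLrr := mul_le_mul_of_nonneg_left hrr hL
  have hfin : 2 * M * ‖xp - x0c‖ + 3/4 * (L * ‖xp - x0c‖ ^ 2) ≤ M ^ 2 + 4 * (L + 2) * P ^ 2 := by
    linarith [hrr, hLrr, sq_nonneg (M - ‖xp - x0c‖), mul_nonneg hL (sq_nonneg P), sq_nonneg P]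
  exact hq2.trans hfin
end

section
/- Let ε > 0, τ ∈ (0,1), t̄ > 0, ℓ₀ ∈ ℕ and N ≥ 1 be such that: t_{ℓ₀+1} ≤ t̄; t_{ℓ₀+i} > ε/2 for every 1 ≤ i ≤ N; and t_{j+1} − ε/4 ≤ τ·(t_j − ε/4) for every j with ℓ₀ + 1 ≤ j ≤ ℓ₀ + N − 1. Then N ≤ (1/(1 − τ))·log(4t̄/ε) + 1. -/
theorem stmt8 (t : ℕ → ℝ) (ε τ tbar : ℝ) (hε : 0 < ε)
    (hτ : τ ∈ Set.Ioo (0 : ℝ) 1) (htbar : 0 < tbar)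
    (l0 N : ℕ) (hN : 1 ≤ N)
    (h1 : t (l0 + 1) ≤ tbar)
    (h2 : ∀ i : ℕ, 1 ≤ i → i ≤ N → ε / 2 < t (l0 + i))
    (h3 : ∀ j : ℕ, l0 + 1 ≤ j → j ≤ l0 + N - 1 →
      t (j + 1) - ε / 4 ≤ τ * (t j - ε / 4)) :
    (N : ℝ) ≤ 1 / (1 - τ) * Real.log (4 * tbar / ε) + 1 := by
  obtain ⟨hτ0, hτ1⟩ := hτ
  -- geometric decay
  have key : ∀ i : ℕ, 1 ≤ i → i ≤ N →
      t (l0 + i) - ε / 4 ≤ τ ^ (i - 1) * (t (l0 + 1) - ε / 4) := by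
    intro i hi1 hiN
    induction i with
    | zero => omega
    | succ k ih =>
      rcases Nat.eq_or_lt_of_le hi1 with h | h
      · simp [← h]
      · have hk1 : 1 ≤ k := by omega
        have hkN : k ≤ N := by omega
        have := h3 (l0 + k) (by omega) (by omega)
        have hrec := ih hk1 hkN
        have hτk : (0:ℝ) ≤ τ ^ (k - 1) := by positivity
        calc t (l0 + (k + 1)) - ε / 4 = t ((l0 + k) + 1) - ε / 4 := by ring_nf
          _ ≤ τ * (t (l0 + k) - ε / 4) := this
          _ ≤ τ * (τ ^ (k - 1) * (t (l0 + 1) - ε / 4)) := by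
              exact mul_le_mul_of_nonneg_left hrec hτ0.le
          _ = τ ^ (k + 1 - 1) * (t (l0 + 1) - ε / 4) := by
              rw [show k + 1 - 1 = (k - 1) + 1 by omega]; ring
  have hN1 : ε / 4 < τ ^ (N - 1) * tbar := by
    have hN0 := h2 N hN le_rfl
    have h := key N hN le_rfl
    have : ε / 4 < t (l0 + N) - ε / 4 := by linarith
    have h1' : t (l0 + 1) - ε / 4 ≤ tbar := by linarith
    have hτk : (0:ℝ) ≤ τ ^ (N - 1) := by positivity
    calc ε / 4 < t (l0 + N) - ε / 4 := this
      _ ≤ τ ^ (N - 1) * (t (l0 + 1) - ε / 4) := h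
      _ ≤ τ ^ (N - 1) * tbar := mul_le_mul_of_nonneg_left h1' hτk
  -- take logs
  have hεpos : (0:ℝ) < ε / 4 := by linarith
  have hlog : Real.log (ε / 4) < (↑(N - 1)) * Real.log τ + Real.log tbar := by
    have := Real.log_lt_log hεpos hN1
    rwa [Real.log_mul (by positivity) (ne_of_gt htbar), Real.log_pow] at this
  have hlogτ : Real.log τ ≤ τ - 1 := Real.log_le_sub_one_of_pos hτ0
  have hdiff : Real.log tbar - Real.log (ε / 4) = Real.log (4 * tbar / ε) := by
    rw [← Real.log_div (ne_of_gt htbar) (ne_of_gt hεpos)]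
    congr 1
    field_simp
  have hNc : (↑(N - 1) : ℝ) * (1 - τ) ≤ Real.log (4 * tbar / ε) := by
    have hn : (0:ℝ) ≤ (↑(N - 1) : ℝ) := Nat.cast_nonneg _
    nlinarith [hlog, hlogτ, hdiff]
  have h1τ : (0:ℝ) < 1 - τ := by linarith
  have hNcast : (↑(N - 1) : ℝ) = (N : ℝ) - 1 := by
    rw [Nat.cast_sub hN]; norm_num
  rw [hNcast] at hNc
  rw [div_mul_eq_mul_div, one_mul, ← sub_le_iff_le_add, le_div_iff₀ h1τ]
  linarith
end

section
/- Let Γ : E → ℝ be convex, x ∈ E, and 0 < λ̃ < λ. If x⁺ minimizes u ↦ Γ(u) + ‖u − x‖²/(2λ) over E and x̃⁺ minimizes u ↦ Γ(u) + ‖u − x‖²/(2λ̃) over E, then ‖x⁺ − x‖ ≤ (λ/λ̃)·‖x̃⁺ − x‖. -/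
open Filter Topology

private lemma prox_subgrad {E : Type*} [NormedAddCommGroup E] [InnerProductSpace ℝ E]
    (Γ : E → ℝ) (hΓ : ConvexOn ℝ Set.univ Γ)
    (x u : E) (lam : ℝ) (hlam : 0 < lam)
    (hmin : ∀ v : E, Γ u + ‖u - x‖ ^ 2 / (2 * lam) ≤ Γ v + ‖v - x‖ ^ 2 / (2 * lam)) :
    ∀ v : E, Γ u + inner ℝ (x - u) (v - u) / lam ≤ Γ v := by
  intro v
  set c : ℝ := inner ℝ (u - x) (v - u) with hc
  set s : ℝ := ‖v - u‖ ^ 2 with hs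
  have key : ∀ t : ℝ, 0 < t → t ≤ 1 →
      Γ u + inner ℝ (x - u) (v - u) / lam ≤ Γ v + t * s / (2 * lam) := by
    intro t ht ht1
    have hconv := hΓ.2 (Set.mem_univ u) (Set.mem_univ v)
      (by linarith : (0:ℝ) ≤ 1 - t) ht.le (by ring)
    have hm := hmin ((1 - t) • u + t • v)
    have hsplit : (1 - t) • u + t • v - x = (u - x) + t • (v - u) := by module
    have hexp : ‖(1 - t) • u + t • v - x‖ ^ 2
        = ‖u - x‖ ^ 2 + 2 * t * c + t ^ 2 * s := by
      rw [hsplit, norm_add_sq_real, real_inner_smul_right, norm_smul]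
      rw [Real.norm_eq_abs, abs_of_pos ht, hc, hs]
      ring
    rw [hexp] at hm
    simp only [smul_eq_mul] at hconv
    have hlam' : (2 * lam) ≠ 0 := by positivity
    have hdiv : (‖u - x‖ ^ 2 + 2 * t * c + t ^ 2 * s) / (2 * lam)
        = ‖u - x‖ ^ 2 / (2 * lam) + t * ((2 * c + t * s) / (2 * lam)) := by
      field_simp; ring
    rw [hdiv] at hm
    have hkey2 : t * (Γ u - Γ v) ≤ t * ((2 * c + t * s) / (2 * lam)) := by linarith
    have hkey3 : Γ u - Γ v ≤ (2 * c + t * s) / (2 * lam) :=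
      le_of_mul_le_mul_left hkey2 ht
    have hflip : (inner ℝ (x - u) (v - u) : ℝ) = - c := by
      rw [hc, ← inner_neg_left]; congr 1; abel
    have hdiv2 : (2 * c + t * s) / (2 * lam) = c / lam + t * s / (2 * lam) := by
      field_simp
    rw [hdiv2] at hkey3
    rw [hflip, neg_div]
    linarith
  have hmem : Set.Ioc (0:ℝ) 1 ∈ 𝓝[>] (0:ℝ) :=
    Ioc_mem_nhdsGT_of_mem (by constructor <;> norm_num)
  have hev : ∀ᶠ t in 𝓝[>] (0:ℝ),
      Γ u + inner ℝ (x - u) (v - u) / lam ≤ Γ v + t * s / (2 * lam) :=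
    Filter.eventually_of_mem hmem (fun t htm => key t htm.1 htm.2)
  have htend : Tendsto (fun t : ℝ => Γ v + t * s / (2 * lam)) (𝓝[>] (0:ℝ))
      (𝓝 (Γ v)) := by
    have hco : Continuous (fun t : ℝ => Γ v + t * s / (2 * lam)) := by continuity
    have h0 : Tendsto (fun t : ℝ => Γ v + t * s / (2 * lam)) (𝓝[>] (0:ℝ))
        (𝓝 (Γ v + 0 * s / (2 * lam))) :=
      (hco.tendsto 0).mono_left (nhdsWithin_le_nhds (s := Set.Ioi (0:ℝ)))
    simpa using h0
  exact ge_of_tendsto htend hev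

theorem stmt10 {E : Type*} [NormedAddCommGroup E] [InnerProductSpace ℝ E]
    [FiniteDimensional ℝ E]
    (Γ : E → ℝ) (hΓ : ConvexOn ℝ Set.univ Γ)
    (x : E) (lamt lam : ℝ) (hlamt : 0 < lamt) (hlt : lamt < lam)
    (xp xtp : E)
    (hxp : ∀ u : E, Γ xp + ‖xp - x‖ ^ 2 / (2 * lam) ≤ Γ u + ‖u - x‖ ^ 2 / (2 * lam))
    (hxtp : ∀ u : E,
      Γ xtp + ‖xtp - x‖ ^ 2 / (2 * lamt) ≤ Γ u + ‖u - x‖ ^ 2 / (2 * lamt)) :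
    ‖xp - x‖ ≤ lam / lamt * ‖xtp - x‖ := by
  have hlam : (0:ℝ) < lam := hlamt.trans hlt
  have h1 := prox_subgrad Γ hΓ x xp lam hlam hxp xtp
  have h2 := prox_subgrad Γ hΓ x xtp lamt hlamt hxtp xp
  set a := xp - x with ha
  set b := xtp - x with hb
  have e1 : (inner ℝ (x - xp) (xtp - xp) : ℝ) = ‖a‖ ^ 2 - inner ℝ a b := by
    have q1 : x - xp = -a := by rw [ha]; abel
    have q2 : xtp - xp = b - a := by rw [ha, hb]; abel
    rw [q1, q2, inner_neg_left, inner_sub_right, real_inner_self_eq_norm_sq]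
    ring
  have e2 : (inner ℝ (x - xtp) (xp - xtp) : ℝ) = ‖b‖ ^ 2 - inner ℝ a b := by
    have q1 : x - xtp = -b := by rw [hb]; abel
    have q2 : xp - xtp = a - b := by rw [ha, hb]; abel
    rw [q1, q2, inner_neg_left, inner_sub_right, real_inner_self_eq_norm_sq,
      real_inner_comm b a]
    ring
  rw [e1] at h1
  rw [e2] at h2
  have hcs : (inner ℝ a b : ℝ) ≤ ‖a‖ * ‖b‖ := real_inner_le_norm a b
  have hsum : (‖a‖ ^ 2 - inner ℝ a b) / lam + (‖b‖ ^ 2 - inner ℝ a b) / lamt ≤ 0 := by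
    linarith
  have hfs : lamt * (‖a‖ ^ 2 - inner ℝ a b) + lam * (‖b‖ ^ 2 - inner ℝ a b) ≤ 0 := by
    have heq : lamt * (‖a‖ ^ 2 - inner ℝ a b) + lam * (‖b‖ ^ 2 - inner ℝ a b)
        = lam * lamt * ((‖a‖ ^ 2 - inner ℝ a b) / lam + (‖b‖ ^ 2 - inner ℝ a b) / lamt) := by
      field_simp
    rw [heq]
    exact mul_nonpos_of_nonneg_of_nonpos (le_of_lt (mul_pos hlam hlamt)) hsum
  have hmain : lamt * ‖a‖ ^ 2 + lam * ‖b‖ ^ 2 ≤ (lamt + lam) * (‖a‖ * ‖b‖) := by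
    nlinarith [hfs, hcs]
  have hna : (0:ℝ) ≤ ‖a‖ := norm_nonneg a
  have hnb : (0:ℝ) ≤ ‖b‖ := norm_nonneg b
  rcases le_or_gt ‖a‖ ‖b‖ with h | h
  · have h1' : (1:ℝ) ≤ lam / lamt := (one_le_div hlamt).mpr hlt.le
    nlinarith [h1', hnb, h]
  · rw [div_mul_eq_mul_div, le_div_iff₀ hlamt]
    nlinarith [hmain, h]
end

section
/- Let λ > 0 with λL < 1, let z₀ ∈ s, and let Γ : E → ℝ be μ-convex on s with Γ ≤ φ on s and Γ ≥ ℓ_f(·; z₀) + h on s. If z minimizes u ↦ Γ(u) + ‖u − z₀‖²/(2λ) over s, then for every u ∈ s: (1/2)(μ + 1/λ)·‖u − z‖² + φ(z) − φ(u) ≤ ‖u − z₀‖²/(2λ) + 2λM²/(1 − λL). -/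
open scoped RealInnerProductSpace

private lemma combo_norm_sq {E : Type*} [NormedAddCommGroup E] [InnerProductSpace ℝ E]
    (a b : ℝ) (hab : a + b = 1) (x y : E) :
    ‖a • x + b • y‖ ^ 2 = a * ‖x‖ ^ 2 + b * ‖y‖ ^ 2 - a * b * ‖x - y‖ ^ 2 := by
  rw [← real_inner_self_eq_norm_sq, ← real_inner_self_eq_norm_sq,
      ← real_inner_self_eq_norm_sq, ← real_inner_self_eq_norm_sq]
  simp only [inner_add_left, inner_add_right, inner_sub_left, inner_sub_right,
    real_inner_smul_left, real_inner_smul_right]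
  rw [real_inner_comm y x]
  linear_combination (a * (inner ℝ x x : ℝ) + b * (inner ℝ y y : ℝ)) * hab

private lemma limit_helper (A B : ℝ)
    (h : ∀ t : ℝ, 0 < t → t < 1 → (1 - t) * B ≤ A) : B ≤ A := by
  refine le_of_forall_pos_le_add fun ε hε => ?_
  rcases le_or_gt B ε with hBε | hBε
  · have h2 := h (1/2) (by norm_num) (by norm_num)
    linarith
  · have hBpos : 0 < B := lt_trans hε hBε
    have h2 := h (ε / B) (by positivity) (by rw [div_lt_one hBpos]; exact hBε)
    have he : (1 - ε / B) * B = B - ε := by field_simp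
    linarith

set_option maxHeartbeats 1000000 in
theorem stmt11 {E : Type*} [NormedAddCommGroup E] [InnerProductSpace ℝ E]
    (s : Set E) (hs : s.Nonempty) (hsconv : Convex ℝ s)
    (f h : E → ℝ) (hf : ConvexOn ℝ s f) (hh : ConvexOn ℝ s h)
    (f' : E → E)
    (hsub : ∀ x ∈ s, ∀ u ∈ s, f x + ⟪f' x, u - x⟫ ≤ f u)
    (M L : ℝ) (hM : 0 ≤ M) (hL : 0 ≤ L)
    (hhyb : ∀ u ∈ s, ∀ v ∈ s, ‖f' u - f' v‖ ≤ 2 * M + L * ‖u - v‖)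
    (μ : ℝ) (hμ : 0 ≤ μ)
    (hhμ : ConvexOn ℝ s (fun z => h z - μ / 2 * ‖z‖ ^ 2))
    (lam : ℝ) (hlam : 0 < lam) (hlamL : lam * L < 1)
    (z0 : E) (hz0 : z0 ∈ s)
    (Γ : E → ℝ)
    (hΓμ : ConvexOn ℝ s (fun u => Γ u - μ / 2 * ‖u‖ ^ 2))
    (hΓφ : ∀ u ∈ s, Γ u ≤ f u + h u)
    (hΓℓ : ∀ u ∈ s, f z0 + ⟪f' z0, u - z0⟫ + h u ≤ Γ u)
    (z : E) (hzs : z ∈ s)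
    (hzmin : IsMinOn (fun u => Γ u + ‖u - z0‖ ^ 2 / (2 * lam)) s z) :
    ∀ u ∈ s,
      1 / 2 * (μ + 1 / lam) * ‖u - z‖ ^ 2 + (f z + h z) - (f u + h u) ≤
        ‖u - z0‖ ^ 2 / (2 * lam) + 2 * lam * M ^ 2 / (1 - lam * L) := by
  intro u hu
  have hden : (0:ℝ) < 1 - lam * L := by linarith
  have ht0 : (0:ℝ) ≤ ‖z - z0‖ := norm_nonneg _
  -- segment points are in s
  have hseg : ∀ τ : ℝ, 0 ≤ τ → τ ≤ 1 → z0 + τ • (z - z0) ∈ s := by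
    intro τ h0 h1
    have hmem := hsconv hz0 hzs (by linarith : (0:ℝ) ≤ 1 - τ) h0 (by ring)
    have : (1 - τ) • z0 + τ • z = z0 + τ • (z - z0) := by module
    rwa [this] at hmem
  -- Step A : descent-type error bound for f at z around z0
  have errA : f z - f z0 - ⟪f' z0, z - z0⟫ ≤ 2*M*‖z - z0‖ + L/2*‖z - z0‖^2 := by
    have main : ∀ n : ℕ, 0 < n →
        f z - f z0 - ⟪f' z0, z - z0⟫ ≤
          2*M*‖z - z0‖ + L*‖z - z0‖^2*((n:ℝ)+1)/(2*(n:ℝ)) := by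
      intro n hn
      have hn' : (0:ℝ) < (n:ℝ) := by exact_mod_cast hn
      have hstep : ∀ k : ℕ, k ≤ n →
          2*(n:ℝ)^2 * (f (z0 + ((k:ℝ)/(n:ℝ)) • (z - z0)) - f z0)
              - 2*(n:ℝ)*(k:ℝ) * ⟪f' z0, z - z0⟫ ≤
            2*(n:ℝ)*(k:ℝ) * (2*M*‖z - z0‖)
              + L*‖z - z0‖^2 * ((k:ℝ)*((k:ℝ)+1)) := by
        intro k
        induction k with
        | zero => intro _; simp
        | succ k ih =>
          intro hk1
          have hk : k ≤ n := Nat.le_of_succ_le hk1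
          have ih' := ih hk
          have hτ1a : (0:ℝ) ≤ ((k:ℝ)+1)/(n:ℝ) := by positivity
          have hτ1b : ((k:ℝ)+1)/(n:ℝ) ≤ 1 := by
            rw [div_le_one hn']; exact_mod_cast hk1
          have hτa : (0:ℝ) ≤ (k:ℝ)/(n:ℝ) := by positivity
          have hτb : (k:ℝ)/(n:ℝ) ≤ 1 := by
            rw [div_le_one hn']; exact_mod_cast hk
          have hxk := hseg _ hτa hτb
          have hxk1 := hseg _ hτ1a hτ1b
          have hsub1 := hsub _ hxk1 _ hxk
          have hdiff : (z0 + ((k:ℝ)/(n:ℝ)) • (z - z0)) - (z0 + (((k:ℝ)+1)/(n:ℝ)) • (z - z0))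
              = (-(1/(n:ℝ))) • (z - z0) := by
            rw [add_sub_add_left_eq_sub, ← sub_smul]
            congr 1
            field_simp
            ring
          rw [hdiff, real_inner_smul_right] at hsub1
          have hhyb1 := hhyb _ hxk1 _ hz0
          have hd1 : (z0 + (((k:ℝ)+1)/(n:ℝ)) • (z - z0)) - z0 = (((k:ℝ)+1)/(n:ℝ)) • (z - z0) :=
            add_sub_cancel_left _ _
          rw [hd1, norm_smul, Real.norm_eq_abs, abs_of_nonneg hτ1a] at hhyb1
          have hcs : ⟪f' (z0 + (((k:ℝ)+1)/(n:ℝ)) • (z - z0)) - f' z0, z - z0⟫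
              ≤ ‖f' (z0 + (((k:ℝ)+1)/(n:ℝ)) • (z - z0)) - f' z0‖ * ‖z - z0‖ :=
            real_inner_le_norm _ _
          rw [inner_sub_left] at hcs
          have hmul := mul_le_mul_of_nonneg_right hhyb1 ht0
          have key1 : ⟪f' (z0 + (((k:ℝ)+1)/(n:ℝ)) • (z - z0)), z - z0⟫
              ≤ ⟪f' z0, z - z0⟫ + (2*M + L*((((k:ℝ)+1)/(n:ℝ))*‖z - z0‖))*‖z - z0‖ := by
            linarith
          -- multiply hsub1 by 2n^2
          have hA := mul_le_mul_of_nonneg_left hsub1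
            (by positivity : (0:ℝ) ≤ 2*(n:ℝ)^2)
          have hidA : 2*(n:ℝ)^2 * (f (z0 + (((k:ℝ)+1)/(n:ℝ)) • (z - z0))
                + -(1/(n:ℝ)) * ⟪f' (z0 + (((k:ℝ)+1)/(n:ℝ)) • (z - z0)), z - z0⟫)
              = 2*(n:ℝ)^2 * f (z0 + (((k:ℝ)+1)/(n:ℝ)) • (z - z0))
                - 2*(n:ℝ) * ⟪f' (z0 + (((k:ℝ)+1)/(n:ℝ)) • (z - z0)), z - z0⟫ := by
            field_simp
            ring
          rw [hidA] at hA
          -- multiply key1 by 2n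
          have hB := mul_le_mul_of_nonneg_left key1
            (by positivity : (0:ℝ) ≤ 2*(n:ℝ))
          have hidB : 2*(n:ℝ) * (⟪f' z0, z - z0⟫
                + (2*M + L*((((k:ℝ)+1)/(n:ℝ))*‖z - z0‖))*‖z - z0‖)
              = 2*(n:ℝ) * ⟪f' z0, z - z0⟫ + 2*(n:ℝ)*(2*M*‖z - z0‖)
                + 2*L*((k:ℝ)+1)*‖z - z0‖^2 := by
            field_simp
            ring
          rw [hidB] at hB
          push_cast
          linarith
      have hfin := hstep n le_rfl
      rw [div_self hn'.ne', one_smul, add_sub_cancel] at hfin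
      have hgoal : 2*(n:ℝ)^2*(2*M*‖z - z0‖ + L*‖z - z0‖^2*((n:ℝ)+1)/(2*(n:ℝ)))
          = 2*(n:ℝ)^2*(2*M*‖z - z0‖) + L*‖z - z0‖^2*((n:ℝ)*((n:ℝ)+1)) := by
        field_simp
      have hfin2 : 2*(n:ℝ)^2 * (f z - f z0 - ⟪f' z0, z - z0⟫)
          ≤ 2*(n:ℝ)^2*(2*M*‖z - z0‖ + L*‖z - z0‖^2*((n:ℝ)+1)/(2*(n:ℝ))) := by
        rw [hgoal]
        nlinarith [hfin, hn']
      exact le_of_mul_le_mul_left hfin2 (by positivity)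
    refine le_of_forall_pos_le_add fun ε hε => ?_
    obtain ⟨n0, hn0⟩ := exists_nat_ge (L*‖z - z0‖^2/(2*ε))
    have hmain := main (n0 + 1) (Nat.succ_pos n0)
    set N : ℝ := ((n0 + 1 : ℕ) : ℝ) with hN
    have hNpos : (0:ℝ) < N := by positivity
    have hNge : L*‖z - z0‖^2/(2*ε) ≤ N := by
      refine le_trans hn0 ?_
      rw [hN]; push_cast; linarith
    have h1 : L*‖z - z0‖^2 ≤ 2*ε*N := by
      rw [div_le_iff₀ (by positivity : (0:ℝ) < 2*ε)] at hNge
      linarith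
    have h2 : L*‖z - z0‖^2*(N+1)/(2*N) = L*‖z - z0‖^2/2 + L*‖z - z0‖^2/(2*N) := by
      field_simp
    have h3 : L*‖z - z0‖^2/(2*N) ≤ ε := by
      rw [div_le_iff₀ (by positivity : (0:ℝ) < 2*N)]
      linarith
    rw [h2] at hmain
    linarith
  -- Step B : strong convexity of the prox objective at the minimizer
  have keyB : Γ z + ‖z - z0‖^2/(2*lam) + (μ + 1/lam)/2 * ‖u - z‖^2
      ≤ Γ u + ‖u - z0‖^2/(2*lam) := by
    have key := limit_helper
      (Γ u + ‖u - z0‖^2/(2*lam) - (Γ z + ‖z - z0‖^2/(2*lam)))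
      ((μ + 1/lam)/2 * ‖u - z‖^2) ?_
    · linarith
    intro t htp htl
    have ha : (0:ℝ) ≤ 1 - t := by linarith
    have hb : (0:ℝ) ≤ t := htp.le
    have hab : (1 - t) + t = 1 := by ring
    have hw : (1 - t) • z + t • u ∈ s := hsconv hzs hu ha hb hab
    have hconv := hΓμ.2 hzs hu ha hb hab
    simp only [smul_eq_mul] at hconv
    have nid1 := combo_norm_sq (1-t) t hab z u
    have nid2 : ‖((1-t) • z + t • u) - z0‖^2
        = (1-t) * (‖z - z0‖^2/(2*lam))*(2*lam) + t * (‖u - z0‖^2/(2*lam))*(2*lam)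
          - (1-t)*t*‖z - u‖^2 := by
      have e : ((1-t) • z + t • u) - z0 = (1-t) • (z - z0) + t • (u - z0) := by module
      rw [e, combo_norm_sq (1-t) t hab (z - z0) (u - z0)]
      have e2 : (z - z0) - (u - z0) = z - u := by abel
      rw [e2]
      field_simp
    have hmin := isMinOn_iff.mp hzmin _ hw
    simp only [nid2] at hmin
    rw [nid1] at hconv
    have hnorm : ‖u - z‖ = ‖z - u‖ := norm_sub_rev _ _
    rw [hnorm]
    have hlamne : (2*lam) ≠ 0 := by positivity
    have he2 : ((1-t)*(‖z - z0‖^2/(2*lam))*(2*lam) + t*(‖u - z0‖^2/(2*lam))*(2*lam)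
          - (1-t)*t*‖z - u‖^2)/(2*lam)
        = (1-t)*(‖z - z0‖^2/(2*lam)) + t*(‖u - z0‖^2/(2*lam))
          - (1-t)*t*(‖z - u‖^2/(2*lam)) := by
      field_simp
    rw [he2] at hmin
    have he : (μ + 1/lam)/2*‖z - u‖^2 = μ/2*‖z - u‖^2 + ‖z - u‖^2/(2*lam) := by
      field_simp
    have comb : t * ((1 - t) * ((μ + 1/lam)/2 * ‖z - u‖^2))
        ≤ t * (Γ u + ‖u - z0‖^2/(2*lam) - (Γ z + ‖z - z0‖^2/(2*lam))) := by
      rw [he]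
      linarith
    have := (mul_le_mul_iff_right₀ htp).mp comb
    linarith [this]
  -- Step C : quadratic bound
  have quadC : 2*M*‖z - z0‖ + L/2*‖z - z0‖^2 - ‖z - z0‖^2/(2*lam)
      ≤ 2*lam*M^2/(1 - lam*L) := by
    have hne1 : lam ≠ 0 := hlam.ne'
    have hne2 : (1 - lam*L) ≠ 0 := hden.ne'
    have expand : 2*M*‖z - z0‖ + L/2*‖z - z0‖^2 - ‖z - z0‖^2/(2*lam) - 2*lam*M^2/(1 - lam*L)
        = -(((1 - lam*L)*‖z - z0‖ - 2*lam*M)^2) / (2*lam*(1 - lam*L)) := by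
      generalize hc : 1 - lam*L = c at hne2 ⊢
      field_simp
      rw [← hc]
      ring
    have hle : -(((1 - lam*L)*‖z - z0‖ - 2*lam*M)^2) / (2*lam*(1 - lam*L)) ≤ 0 := by
      apply div_nonpos_of_nonpos_of_nonneg
      · exact neg_nonpos_of_nonneg (sq_nonneg _)
      · positivity
    linarith [expand, hle]
  have hΓu := hΓφ u hu
  have hΓz := hΓℓ z hzs
  -- combine; note 1/2*(μ+1/lam) = (μ+1/lam)/2
  have hfinal : 1/2*(μ + 1/lam)*‖u - z‖^2 = (μ + 1/lam)/2 * ‖u - z‖^2 := by ring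
  linarith [errA, keyB, quadC, hΓu, hΓz]
end

section
/- Let x₀c ∈ s with ‖x₀c − x*‖ ≤ √2·d₀, let Γ : E → ℝ be μ-convex on s with Γ ≤ φ on s and Γ ≥ ℓ_f(·; x₀c) + h on s, and let x⁺ minimize u ↦ Γ(u) + ‖u − x₀c‖²/(2λ) over s. Then ‖x₀c − x⁺‖ ≤ 2√2·( max{1, 2λL}·d₀ + λM ). -/
set_option maxHeartbeats 1000000


open scoped RealInnerProductSpace

private lemma normsq_combo {E : Type*} [NormedAddCommGroup E] [InnerProductSpace ℝ E]
    (σ : ℝ) (a b : E) :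
    ‖(1-σ)•a + σ•b‖^2 = (1-σ)*‖a‖^2 + σ*‖b‖^2 - σ*(1-σ)*‖a-b‖^2 := by
  have h : ∀ v : E, ‖v‖^2 = ⟪v,v⟫ := fun v => (real_inner_self_eq_norm_sq v).symm
  rw [h, h, h, h]
  simp only [inner_add_left, inner_add_right, inner_sub_left, inner_sub_right,
    real_inner_smul_left, real_inner_smul_right]
  rw [real_inner_comm b a]
  ring


private lemma aux_step (r t D K : ℝ) (hr : 0 ≤ r) (hD : 0 ≤ D) (hK : 0 ≤ K)
    (hmain : r^2 + t^2 ≤ D^2 + 2*K*(D + t)) : r ≤ D + K := by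
  nlinarith [sq_nonneg (K - t), sq_nonneg (D + K - r), sq_nonneg (D + K + r)]

private lemma aux_final (r D d0 lam M L mx s2 : ℝ) (hlam : 0 ≤ lam) (hM : 0 ≤ M)
    (hL : 0 ≤ L) (hd0 : 0 ≤ d0) (hs2 : 1 ≤ s2) (hmx1 : 1 ≤ mx) (hmx2 : 2*lam*L ≤ mx)
    (hDd : D ≤ s2*d0) (hr : r ≤ D + lam*(2*M + L*D)) :
    r ≤ 2*s2*(mx*d0 + lam*M) := by
  have hLL : 0 ≤ lam*L := mul_nonneg hlam hL
  have e1 : lam*L*D ≤ lam*L*(s2*d0) := mul_le_mul_of_nonneg_left hDd hLL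
  have e2 : (1+lam*L)*(s2*d0) ≤ (2*mx)*(s2*d0) :=
    mul_le_mul_of_nonneg_right (by linarith) (mul_nonneg (by linarith) hd0)
  have e3 : 2*(lam*M) ≤ (2*s2)*(lam*M) :=
    mul_le_mul_of_nonneg_right (by linarith) (mul_nonneg hlam hM)
  nlinarith [e1, e2, e3, hr, hDd]

theorem stmt12 {E : Type*} [NormedAddCommGroup E] [InnerProductSpace ℝ E]
    [FiniteDimensional ℝ E]
    (s : Set E) (hs : s.Nonempty) (hscl : IsClosed s) (hsconv : Convex ℝ s)
    (f h : E → ℝ) (hf : ConvexOn ℝ s f) (hh : ConvexOn ℝ s h)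
    (hfc : ContinuousOn f s) (hhc : ContinuousOn h s)
    (xstar : E) (hxstar : xstar ∈ s)
    (hstar : ∀ u ∈ s, f xstar + h xstar ≤ f u + h u)
    (d0 : ℝ) (hd0 : 0 ≤ d0)
    (f' : E → E)
    (hsub : ∀ x ∈ s, ∀ u ∈ s, f x + ⟪f' x, u - x⟫ ≤ f u)
    (M L : ℝ) (hM : 0 ≤ M) (hL : 0 ≤ L)
    (hhyb : ∀ u ∈ s, ∀ v ∈ s, ‖f' u - f' v‖ ≤ 2 * M + L * ‖u - v‖)
    (μ : ℝ) (hμ : 0 ≤ μ)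
    (hhμ : ConvexOn ℝ s (fun z => h z - μ / 2 * ‖z‖ ^ 2))
    (lam : ℝ) (hlam : 0 < lam)
    (x0c : E) (hx0cs : x0c ∈ s) (hx0c : ‖x0c - xstar‖ ≤ Real.sqrt 2 * d0)
    (Γ : E → ℝ)
    (hΓμ : ConvexOn ℝ s (fun u => Γ u - μ / 2 * ‖u‖ ^ 2))
    (hΓφ : ∀ u ∈ s, Γ u ≤ f u + h u)
    (hΓℓ : ∀ u ∈ s, f x0c + ⟪f' x0c, u - x0c⟫ + h u ≤ Γ u)
    (xp : E) (hxps : xp ∈ s)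
    (hxpmin : IsMinOn (fun u => Γ u + ‖u - x0c‖ ^ 2 / (2 * lam)) s xp) :
    ‖x0c - xp‖ ≤ 2 * Real.sqrt 2 * (max 1 (2 * lam * L) * d0 + lam * M) := by
  have hDnn : (0:ℝ) ≤ ‖xstar - x0c‖ := norm_nonneg _
  have hrnn : (0:ℝ) ≤ ‖xp - x0c‖ := norm_nonneg _
  have htnn : (0:ℝ) ≤ ‖xp - xstar‖ := norm_nonneg _
  have hD : ‖xstar - x0c‖ ≤ Real.sqrt 2 * d0 := by rw [norm_sub_rev]; exact hx0c
  have h2l : (0:ℝ) < 2 * lam := by linarith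
  -- KEY3 : crude descent bound at xstar
  have key3 : f xstar ≤ f x0c + ⟪f' x0c, xstar - x0c⟫
      + (2*M + L*‖xstar - x0c‖) * ‖xstar - x0c‖ := by
    have h1 := hsub xstar hxstar x0c hx0cs
    have h2 : ⟪f' xstar - f' x0c, xstar - x0c⟫ ≤ (2*M + L*‖xstar - x0c‖) * ‖xstar - x0c‖ :=
      le_trans (real_inner_le_norm _ _)
        (mul_le_mul_of_nonneg_right (hhyb xstar hxstar x0c hx0cs) hDnn)
    have h3 : ⟪f' xstar, x0c - xstar⟫ = -⟪f' xstar, xstar - x0c⟫ := by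
      rw [← inner_neg_right]; congr 1; abel
    have h4 : ⟪f' xstar - f' x0c, xstar - x0c⟫
        = ⟪f' xstar, xstar - x0c⟫ - ⟪f' x0c, xstar - x0c⟫ := inner_sub_left _ _ _
    linarith only [h1, h2, h3, h4]
  -- MAIN inequality via ε-argument
  have main : ‖xp - x0c‖^2 + ‖xp - xstar‖^2 ≤ ‖xstar - x0c‖^2
      + 2*lam*(2*M + L*‖xstar - x0c‖) * (‖xstar - x0c‖ + ‖xp - xstar‖) := by
    apply le_of_forall_pos_le_add
    intro ε hε
    have hXnn : (0:ℝ) ≤ ‖xp - xstar‖^2 + 2*lam*L*‖xp - xstar‖^2 := by positivity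
    set X : ℝ := ‖xp - xstar‖^2 + 2*lam*L*‖xp - xstar‖^2 with hXdef
    set δ : ℝ := min 1 (ε/(X+1)) with hδdef
    have hδ0 : 0 < δ := lt_min one_pos (div_pos hε (by linarith))
    have hδ1 : δ ≤ 1 := min_le_left _ _
    have h1δ : (0:ℝ) ≤ 1 - δ := by linarith
    -- strong convexity step with comparison point (1-δ)•xp + δ•xstar
    have hymem : (1-δ)•xp + δ•xstar ∈ s := hsconv hxps hxstar h1δ hδ0.le (by ring)
    have hmin0 : Γ xp + ‖xp - x0c‖^2/(2*lam)
        ≤ Γ ((1-δ)•xp + δ•xstar) + ‖((1-δ)•xp + δ•xstar) - x0c‖^2/(2*lam) := by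
      have := isMinOn_iff.mp hxpmin _ hymem
      simpa using this
    have hq : ‖((1-δ)•xp + δ•xstar) - x0c‖^2
        = (1-δ)*‖xp - x0c‖^2 + δ*‖xstar - x0c‖^2 - δ*(1-δ)*‖xp - xstar‖^2 := by
      rw [show ((1-δ)•xp + δ•xstar) - x0c = (1-δ)•(xp - x0c) + δ•(xstar - x0c) by module,
        normsq_combo]
      rw [show (xp - x0c) - (xstar - x0c) = xp - xstar by abel]
    have hΓ1 := hΓμ.2 hxps hxstar h1δ hδ0.le (by ring : (1-δ) + δ = 1)
    simp only [smul_eq_mul] at hΓ1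
    have hnq : (1-δ)*‖xp‖^2 + δ*‖xstar‖^2 - ‖(1-δ)•xp + δ•xstar‖^2
        = δ*(1-δ)*‖xp - xstar‖^2 := by
      rw [normsq_combo]; ring
    have hnq2 : μ/2*((1-δ)*‖xp‖^2 + δ*‖xstar‖^2 - ‖(1-δ)•xp + δ•xstar‖^2)
        = μ/2*(δ*(1-δ)*‖xp - xstar‖^2) := by rw [hnq]
    have hpos : 0 ≤ μ/2*(δ*(1-δ)*‖xp - xstar‖^2) := by
      have := mul_nonneg (mul_nonneg hδ0.le h1δ) (sq_nonneg ‖xp - xstar‖)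
      positivity
    have hΓy : Γ ((1-δ)•xp + δ•xstar) ≤ (1-δ)*Γ xp + δ*Γ xstar := by
      linarith only [hΓ1, hnq2, hpos]
    have hmin2 : 2*lam*(Γ xp) + ‖xp - x0c‖^2
        ≤ 2*lam*(Γ ((1-δ)•xp + δ•xstar)) + ‖((1-δ)•xp + δ•xstar) - x0c‖^2 := by
      have hmm := mul_le_mul_of_nonneg_left hmin0 h2l.le
      have e1 : 2*lam*(‖xp - x0c‖^2/(2*lam)) = ‖xp - x0c‖^2 := by field_simp
      have e2 : 2*lam*(‖((1-δ)•xp + δ•xstar) - x0c‖^2/(2*lam))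
          = ‖((1-δ)•xp + δ•xstar) - x0c‖^2 := by field_simp
      rw [mul_add, mul_add, e1, e2] at hmm
      exact hmm
    have hΓy2 := mul_le_mul_of_nonneg_left hΓy h2l.le
    have S0 : δ*(2*lam*Γ xp + ‖xp - x0c‖^2 + (1-δ)*‖xp - xstar‖^2)
        ≤ δ*(2*lam*Γ xstar + ‖xstar - x0c‖^2) := by linarith only [hmin2, hq, hΓy2]
    have S1 : 2*lam*Γ xp + ‖xp - x0c‖^2 + (1-δ)*‖xp - xstar‖^2
        ≤ 2*lam*Γ xstar + ‖xstar - x0c‖^2 := le_of_mul_le_mul_left S0 hδ0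
    -- the h-slope bound via comparison point (1-δ)•xstar + δ•xp
    have hzmem : (1-δ)•xstar + δ•xp ∈ s := hsconv hxstar hxps h1δ hδ0.le (by ring)
    have c1 := hstar _ hzmem
    have c2 : h ((1-δ)•xstar + δ•xp) ≤ (1-δ)*h xstar + δ*h xp :=
      hh.2 hxstar hxps h1δ hδ0.le (by ring)
    have c3 := hsub _ hzmem xstar hxstar
    have c4 : ⟪f' ((1-δ)•xstar + δ•xp), xstar - ((1-δ)•xstar + δ•xp)⟫
        = -(δ*⟪f' ((1-δ)•xstar + δ•xp), xp - xstar⟫) := by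
      rw [show xstar - ((1-δ)•xstar + δ•xp) = -(δ•(xp - xstar)) by module,
        inner_neg_right, real_inner_smul_right]
    have i3 : ‖((1-δ)•xstar + δ•xp) - x0c‖ ≤ ‖xstar - x0c‖ + δ*‖xp - xstar‖ := by
      rw [show ((1-δ)•xstar + δ•xp) - x0c = (xstar - x0c) + δ•(xp - xstar) by module]
      refine le_trans (norm_add_le _ _) ?_
      rw [norm_smul, Real.norm_eq_abs, abs_of_nonneg hδ0.le]
    have c5 : ⟪f' ((1-δ)•xstar + δ•xp), xp - xstar⟫ ≤ ⟪f' x0c, xp - xstar⟫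
        + (2*M + L*(‖xstar - x0c‖ + δ*‖xp - xstar‖))*‖xp - xstar‖ := by
      have i1 : ⟪f' ((1-δ)•xstar + δ•xp) - f' x0c, xp - xstar⟫
          ≤ ‖f' ((1-δ)•xstar + δ•xp) - f' x0c‖ * ‖xp - xstar‖ := real_inner_le_norm _ _
      have i2 := hhyb _ hzmem x0c hx0cs
      have i4 : ⟪f' ((1-δ)•xstar + δ•xp) - f' x0c, xp - xstar⟫
          = ⟪f' ((1-δ)•xstar + δ•xp), xp - xstar⟫ - ⟪f' x0c, xp - xstar⟫ :=
        inner_sub_left _ _ _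
      linarith only [i1, i4, mul_le_mul_of_nonneg_right i2 htnn,
        mul_le_mul_of_nonneg_right (mul_le_mul_of_nonneg_left i3 hL) htnn]
    have c6 : h xstar ≤ h xp + ⟪f' x0c, xp - xstar⟫
        + (2*M + L*(‖xstar - x0c‖ + δ*‖xp - xstar‖))*‖xp - xstar‖ := by
      have s1 : δ*h xstar ≤ δ*(h xp + ⟪f' ((1-δ)•xstar + δ•xp), xp - xstar⟫) := by
        linarith only [c1, c2, c3, c4]
      have s2 := (mul_le_mul_iff_right₀ hδ0).mp s1
      linarith only [c5, s2]
    -- combine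
    have hA := hΓℓ xp hxps
    have hB := hΓφ xstar hxstar
    have h6 : ⟪f' x0c, xp - x0c⟫ = ⟪f' x0c, xstar - x0c⟫ + ⟪f' x0c, xp - xstar⟫ := by
      rw [← inner_add_right, show xstar - x0c + (xp - xstar) = xp - x0c by abel]
    have H7 : Γ xstar - Γ xp ≤ (2*M + L*‖xstar - x0c‖)*‖xstar - x0c‖
        + (2*M + L*(‖xstar - x0c‖ + δ*‖xp - xstar‖))*‖xp - xstar‖ := by
      linarith only [hA, hB, key3, c6, h6]
    have H8 := mul_le_mul_of_nonneg_left H7 h2l.le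
    have hfinδ : ‖xp - x0c‖^2 + ‖xp - xstar‖^2 ≤ ‖xstar - x0c‖^2
        + 2*lam*(2*M + L*‖xstar - x0c‖) * (‖xstar - x0c‖ + ‖xp - xstar‖) + δ*X := by
      rw [hXdef]; linarith only [S1, H8]
    have hδX : δ*X ≤ ε := by
      have l1 : δ ≤ ε/(X+1) := min_le_right _ _
      have l2 : δ*X ≤ ε/(X+1)*X := mul_le_mul_of_nonneg_right l1 hXnn
      have l3 : ε/(X+1)*X ≤ ε := by
        rw [div_mul_eq_mul_div, div_le_iff₀ (by linarith : (0:ℝ) < X+1)]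
        linarith only [hε.le, hXnn]
      exact le_trans l2 l3
    linarith only [hfinδ, hδX]
  -- conclude
  have hKnn : (0:ℝ) ≤ lam*(2*M + L*‖xstar - x0c‖) := by positivity
  have hrD : ‖xp - x0c‖ ≤ ‖xstar - x0c‖ + lam*(2*M + L*‖xstar - x0c‖) := by
    refine aux_step _ ‖xp - xstar‖ _ _ hrnn hDnn hKnn ?_
    linarith only [main]
  have hs2 : (1:ℝ) ≤ Real.sqrt 2 := by
    rw [← Real.sqrt_one]; exact Real.sqrt_le_sqrt one_le_two
  rw [norm_sub_rev]
  exact aux_final _ _ _ _ _ _ _ _ hlam.le hM hL hd0 hs2 (le_max_left _ _)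
    (le_max_right _ _) hD hrD
end

section
/- Let θ ≥ 1 and δ > 0 be scalars, and let {η_j}_{j≥1} and {α_j}_{j≥0} be sequences of nonnegative real numbers satisfying η_j ≤ α_{j−1} − θ·α_j + δ for all j ≥ 1. Then min_{1 ≤ j ≤ k} η_j ≤ 2δ for every integer k ≥ 1 such that k ≥ min{ α₀/δ, (θ/(θ − 1))·log(α₀(θ − 1)/δ + 1) }, where for θ = 1 the second term of the minimum is interpreted as the first (α₀/δ). -/
theorem stmt14 (θ δ : ℝ) (hθ : 1 ≤ θ) (hδ : 0 < δ)
    (η α : ℕ → ℝ)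
    (hη : ∀ j : ℕ, 1 ≤ j → 0 ≤ η j)
    (hα : ∀ j : ℕ, 0 ≤ α j)
    (hrec : ∀ j : ℕ, 1 ≤ j → η j ≤ α (j - 1) - θ * α j + δ) :
    ∀ k : ℕ, 1 ≤ k →
      (k : ℝ) ≥
        (if θ = 1 then α 0 / δ
         else min (α 0 / δ)
           (θ / (θ - 1) * Real.log (α 0 * (θ - 1) / δ + 1))) →
      ∃ j : ℕ, 1 ≤ j ∧ j ≤ k ∧ η j ≤ 2 * δ := by
  intro k hk1 hkge
  by_contra hcon
  push_neg at hcon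
  obtain ⟨m, rfl⟩ : ∃ m, k = m + 1 := ⟨k - 1, (Nat.succ_pred_eq_of_pos hk1).symm⟩
  have hstep : ∀ j : ℕ, 1 ≤ j → j ≤ m + 1 → θ * α j + δ < α (j - 1) := by
    intro j hj hjk
    have h1 := hrec j hj
    have h2 := hcon j hj hjk
    linarith
  have hchain : ∀ j : ℕ, j ≤ m + 1 → α j + j * δ ≤ α 0 := by
    intro j
    induction j with
    | zero => simp
    | succ n ih =>
      intro hjk
      have hn := ih (Nat.le_of_succ_le hjk)
      have hs := hstep (n + 1) (Nat.le_add_left 1 n) hjk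
      simp only [Nat.add_sub_cancel] at hs
      have hθαn : α (n + 1) ≤ θ * α (n + 1) :=
        le_mul_of_one_le_left (hα _) hθ
      push_cast
      linarith
  -- strict linear bound at k = m+1
  have hklt : ((m + 1 : ℕ) : ℝ) * δ < α 0 := by
    have hn := hchain m (Nat.le_succ m)
    have hs := hstep (m + 1) (Nat.le_add_left 1 m) le_rfl
    simp only [Nat.add_sub_cancel] at hs
    have hθαn : α (m + 1) ≤ θ * α (m + 1) :=
      le_mul_of_one_le_left (hα _) hθ
    have h0 := hα (m + 1)
    push_cast
    have h0' := hα m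
    nlinarith [hα m]
  have hkA : ((m + 1 : ℕ) : ℝ) < α 0 / δ := by
    rw [lt_div_iff₀ hδ]; linarith
  by_cases hθ1 : θ = 1
  · rw [if_pos hθ1] at hkge
    exact absurd hkge (not_le.mpr hkA)
  · rw [if_neg hθ1] at hkge
    have hθgt : 1 < θ := lt_of_le_of_ne hθ (Ne.symm hθ1)
    have hθm : 0 < θ - 1 := by linarith
    set c : ℝ := δ / (θ - 1) with hc
    have hcpos : 0 < c := div_pos hδ hθm
    have hθc : θ * c = δ + c := by
      have h := div_mul_cancel₀ δ (ne_of_gt hθm)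
      rw [hc]; linear_combination h
    have hgeo : ∀ j : ℕ, j ≤ m + 1 → θ ^ j * (α j + c) ≤ α 0 + c := by
      intro j
      induction j with
      | zero => simp
      | succ n ih =>
        intro hjk
        have hn := ih (Nat.le_of_succ_le hjk)
        have hs := hstep (n + 1) (Nat.le_add_left 1 n) hjk
        simp only [Nat.add_sub_cancel] at hs
        have hkey : θ * (α (n + 1) + c) < α n + c := by
          rw [mul_add, hθc]; linarith
        have hpow : (0:ℝ) < θ ^ n := pow_pos (by linarith) n
        calc θ ^ (n + 1) * (α (n + 1) + c)
            = θ ^ n * (θ * (α (n + 1) + c)) := by ring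
          _ ≤ θ ^ n * (α n + c) := by
              apply mul_le_mul_of_nonneg_left (le_of_lt hkey) (le_of_lt hpow)
          _ ≤ α 0 + c := hn
    -- strict geometric bound
    have hgstrict : θ ^ (m + 1) * c < α 0 + c := by
      have hn := hgeo m (Nat.le_succ m)
      have hs := hstep (m + 1) (Nat.le_add_left 1 m) le_rfl
      simp only [Nat.add_sub_cancel] at hs
      have hkey : θ * (α (m + 1) + c) < α m + c := by
        rw [mul_add, hθc]; linarith
      have hpow : (0:ℝ) < θ ^ m := pow_pos (by linarith) m
      have h1 : θ ^ (m + 1) * c ≤ θ ^ (m + 1) * (α (m + 1) + c) := by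
        apply mul_le_mul_of_nonneg_left _ (le_of_lt (pow_pos (by linarith) _))
        have := hα (m + 1); linarith
      calc θ ^ (m + 1) * c ≤ θ ^ (m + 1) * (α (m + 1) + c) := h1
        _ = θ ^ m * (θ * (α (m + 1) + c)) := by ring
        _ < θ ^ m * (α m + c) := by
            exact mul_lt_mul_of_pos_left hkey hpow
        _ ≤ α 0 + c := hn
    have hXpos : (0:ℝ) < α 0 * (θ - 1) / δ + 1 := by
      have h0 := hα 0
      have : 0 ≤ α 0 * (θ - 1) / δ := by positivity
      linarith
    have hpowlt : θ ^ (m + 1) < α 0 * (θ - 1) / δ + 1 := by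
      rw [← lt_div_iff₀ hcpos] at hgstrict
      have : (α 0 + c) / c = α 0 * (θ - 1) / δ + 1 := by
        rw [hc]; field_simp
      rw [this] at hgstrict
      exact hgstrict
    have hloglt : ((m + 1 : ℕ) : ℝ) * Real.log θ <
        Real.log (α 0 * (θ - 1) / δ + 1) := by
      have := Real.log_lt_log (pow_pos (by linarith : (0:ℝ) < θ) (m + 1)) hpowlt
      rwa [Real.log_pow] at this
      
    have hlogθ : (θ - 1) / θ ≤ Real.log θ := by
      have h := Real.log_le_sub_one_of_pos (x := 1 / θ) (by positivity)
      rw [Real.log_div one_ne_zero (by linarith), Real.log_one] at h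
      have hθpos : (0:ℝ) < θ := by linarith
      have h' : 1 - 1 / θ ≤ Real.log θ := by linarith
      have key : (1 - 1 / θ) * θ = θ - 1 := by field_simp
      rw [div_le_iff₀ hθpos]
      nlinarith [mul_le_mul_of_nonneg_right h' hθpos.le]
    have hkB : ((m + 1 : ℕ) : ℝ) <
        θ / (θ - 1) * Real.log (α 0 * (θ - 1) / δ + 1) := by
      have hθpos : (0:ℝ) < θ := by linarith
      have h1 : ((m + 1 : ℕ) : ℝ) * ((θ - 1) / θ) ≤ ((m + 1 : ℕ) : ℝ) * Real.log θ := by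
        apply mul_le_mul_of_nonneg_left hlogθ (by positivity)
      have h2 : ((m + 1 : ℕ) : ℝ) * ((θ - 1) / θ) < Real.log (α 0 * (θ - 1) / δ + 1) :=
        lt_of_le_of_lt h1 hloglt
      rw [← lt_div_iff₀ (by positivity : (0:ℝ) < (θ - 1) / θ)] at h2
      have : Real.log (α 0 * (θ - 1) / δ + 1) / ((θ - 1) / θ)
          = θ / (θ - 1) * Real.log (α 0 * (θ - 1) / δ + 1) := by
        field_simp
      linarith [this ▸ h2]
    exact absurd hkge (not_le.mpr (lt_min hkA hkB))
end

section
/- Let ε > 0 and let λ > 0 satisfy 4λ(M² + εL) ≤ ε. Then for every x, x⁺ ∈ s one has f(x⁺) − ℓ_f(x⁺; x) − ‖x⁺ − x‖²/(2λ) ≤ ε/2. -/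
open scoped RealInnerProductSpace

theorem stmt17 {E : Type*} [NormedAddCommGroup E] [InnerProductSpace ℝ E]
    (s : Set E) (hs : s.Nonempty) (hsconv : Convex ℝ s)
    (f : E → ℝ) (hf : ConvexOn ℝ s f)
    (f' : E → E)
    (hsub : ∀ x ∈ s, ∀ u ∈ s, f x + ⟪f' x, u - x⟫ ≤ f u)
    (M L : ℝ) (hM : 0 ≤ M) (hL : 0 ≤ L)
    (hhyb : ∀ u ∈ s, ∀ v ∈ s, ‖f' u - f' v‖ ≤ 2 * M + L * ‖u - v‖)
    (ε : ℝ) (hε : 0 < ε)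
    (lam : ℝ) (hlam : 0 < lam) (hlamle : 4 * lam * (M ^ 2 + ε * L) ≤ ε) :
    ∀ x ∈ s, ∀ xp ∈ s,
      f xp - (f x + ⟪f' x, xp - x⟫) - ‖xp - x‖ ^ 2 / (2 * lam) ≤ ε / 2 := by
  intro x hx xp hxp
  set r : ℝ := ‖xp - x‖ with hr
  have hrnn : 0 ≤ r := norm_nonneg _
  have h2 := hsub xp hxp x hx
  have hxm : x - xp = -(xp - x) := by abel
  rw [hxm, inner_neg_right] at h2
  -- f xp - f x ≤ ⟪f' xp, xp - x⟫
  have hD : f xp - (f x + ⟪f' x, xp - x⟫) ≤ ⟪f' xp - f' x, xp - x⟫ := by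
    rw [inner_sub_left]; linarith
  have hCS : ⟪f' xp - f' x, xp - x⟫ ≤ ‖f' xp - f' x‖ * r :=
    real_inner_le_norm _ _
  have hhy := hhyb xp hxp x hx
  have hb : ‖f' xp - f' x‖ * r ≤ (2 * M + L * r) * r :=
    mul_le_mul_of_nonneg_right hhy hrnn
  have key : f xp - (f x + ⟪f' x, xp - x⟫) ≤ 2 * M * r + L * r ^ 2 := by
    nlinarith
  have hL4 : 4 * lam * L ≤ 1 := by
    nlinarith [sq_nonneg M]
  have ht : (0:ℝ) < 1 - 2 * lam * L := by linarith
  have main : 2 * M * r + L * r ^ 2 - ε / 2 ≤ r ^ 2 / (2 * lam) := by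
    rw [le_div_iff₀ (by positivity : (0:ℝ) < 2 * lam)]
    nlinarith [sq_nonneg ((1 - 2 * lam * L) * r - 2 * lam * M), ht,
      mul_pos hlam hε, mul_nonneg (mul_nonneg hlam.le hlam.le) (mul_nonneg hL hε.le),
      mul_nonneg hrnn hrnn, mul_nonneg hlam.le hM]
  linarith
end

section
/- There exists θ ∈ [0,1], with θ = 1 if A_f(x) > ℓ_f(x; x⁻) and θ = 0 if A_f(x) < ℓ_f(x; x⁻), such that, setting A_f⁺ := θ·A_f + (1 − θ)·ℓ_f(·; x⁻), Γ̄ := A_f⁺ + h, and Γ⁺ := max{A_f⁺, ℓ_f(·; x)} + h, the following hold: (i) Γ⁺ and Γ̄ are μ-convex and satisfy Γ⁺ ≤ φ and Γ̄ ≤ φ pointwise; (ii) Γ̄(x) = Γ(x); (iii) x minimizes u ↦ Γ̄(u) + ‖u − x^c‖²/(2λ) over E; (iv) for every τ ∈ (0,1), τ·Γ̄ + (1 − τ)·(ℓ_f(·; x) + h) ≤ Γ⁺ pointwise. (Properties of the two-cuts bundle update scheme.) -/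
open scoped RealInnerProductSpace

/-- The linearization `ℓ_f(u; x) := f(x) + ⟪f'(x), u − x⟫`. -/
noncomputable def lin {E : Type*} [NormedAddCommGroup E] [InnerProductSpace ℝ E]
    (f : E → ℝ) (f' : E → E) (u x : E) : ℝ :=
  f x + ⟪f' x, u - x⟫

section helpers
variable {E : Type*} [NormedAddCommGroup E] [InnerProductSpace ℝ E]

lemma aff_convexOn (v : E) (b : ℝ) : ConvexOn ℝ Set.univ (fun u => ⟪v, u⟫ + b) := by
  refine ⟨convex_univ, ?_⟩
  intro p _ q _ a c ha hc hac
  simp only [inner_add_right, real_inner_smul_right, smul_eq_mul]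
  have e : a * (⟪v, p⟫ + b) + c * (⟪v, q⟫ + b) = a * ⟪v, p⟫ + c * ⟪v, q⟫ + (a + c) * b := by
    ring
  rw [e, hac, one_mul]

lemma seg_min {F : E → ℝ} (hF : ConvexOn ℝ Set.univ F) {x u : E} {t : ℝ}
    (ht0 : 0 < t) (ht1 : t ≤ 1) (hseg : F x ≤ F ((1 - t) • x + t • u)) : F x ≤ F u := by
  have h2 := hF.2 (Set.mem_univ x) (Set.mem_univ u) (by linarith : (0:ℝ) ≤ 1 - t) ht0.le (by ring)
  simp only [smul_eq_mul] at h2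
  nlinarith

lemma prox_convexOn (xc : E) (lam : ℝ) (hlam : 0 < lam) :
    ConvexOn ℝ Set.univ (fun u => ‖u - xc‖ ^ 2 / (2 * lam)) := by
  refine ⟨convex_univ, ?_⟩
  intro p _ q _ a c ha hc hac
  simp only [smul_eq_mul]
  have h1 : ‖(a • p + c • q) - xc‖ ≤ a * ‖p - xc‖ + c * ‖q - xc‖ := by
    have hxc : a • xc + c • xc = xc := by rw [← add_smul, hac, one_smul]
    have he : (a • p + c • q) - xc = a • (p - xc) + c • (q - xc) := by
      conv_lhs => rw [← hxc]
      rw [smul_sub, smul_sub]; abel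
    rw [he]
    refine (norm_add_le _ _).trans ?_
    rw [norm_smul, norm_smul, Real.norm_eq_abs, Real.norm_eq_abs,
      abs_of_nonneg ha, abs_of_nonneg hc]
  have h2 : ‖(a • p + c • q) - xc‖ ^ 2 ≤ a * ‖p - xc‖ ^ 2 + c * ‖q - xc‖ ^ 2 := by
    nlinarith [h1, norm_nonneg ((a • p + c • q) - xc),
      mul_nonneg (mul_nonneg ha hc) (sq_nonneg (‖p - xc‖ - ‖q - xc‖)),
      mul_nonneg ha (norm_nonneg (p - xc)), mul_nonneg hc (norm_nonneg (q - xc))]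
  have hd : (0:ℝ) < 2 * lam := by linarith
  rw [div_le_iff₀ hd]
  have heq : (a * (‖p - xc‖ ^ 2 / (2 * lam)) + c * (‖q - xc‖ ^ 2 / (2 * lam))) * (2 * lam)
      = a * ‖p - xc‖ ^ 2 + c * ‖q - xc‖ ^ 2 := by field_simp
  rw [heq]; exact h2

lemma convexOn_congr {f g : E → ℝ} (hf : ConvexOn ℝ Set.univ f) (h : ∀ u, f u = g u) :
    ConvexOn ℝ Set.univ g := (funext h : f = g) ▸ hf

/-- If `x` minimizes a convex `N` over the open region `{c < 0}` (with `c` affine and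
`c x < 0`), then `x` minimizes `N` globally. -/
lemma min_of_active {c N : E → ℝ}
    (hcaff : ∀ s t : ℝ, s + t = 1 → ∀ u v : E, c (s • u + t • v) = s * c u + t * c v)
    (hN : ConvexOn ℝ Set.univ N) {x : E} (hcx : c x < 0)
    (hmin : ∀ u, c u < 0 → N x ≤ N u) : ∀ u, N x ≤ N u := by
  intro u
  by_cases hcu : c u < 0
  · exact hmin u hcu
  push_neg at hcu
  have hd : (0:ℝ) < c u - c x := by linarith
  set t : ℝ := (-c x) / (2 * (c u - c x)) with htdef
  have ht0 : 0 < t := div_pos (by linarith) (by linarith)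
  have ht1 : t ≤ 1 := by rw [htdef, div_le_one (by linarith)]; linarith
  have hcw : c ((1 - t) • x + t • u) = (1 - t) * c x + t * c u := hcaff (1 - t) t (by ring) x u
  have htm : t * (c u - c x) = -c x / 2 := by
    rw [htdef]; field_simp
  have hcwneg : c ((1 - t) • x + t • u) < 0 := by rw [hcw]; nlinarith [htm]
  exact seg_min hN ht0 ht1 (hmin _ hcwneg)

/-- Existence of the interpolation weight `θ` when both cuts are active. -/
lemma exists_theta {c D : E → ℝ}
    (hcaff : ∀ s t : ℝ, s + t = 1 → ∀ u v : E, c (s • u + t • v) = s * c u + t * c v)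
    (hD : ConvexOn ℝ Set.univ D)
    (hmin : ∀ u, 0 ≤ max (c u) 0 + D u) :
    ∃ θ : ℝ, 0 ≤ θ ∧ θ ≤ 1 ∧ ∀ u, 0 ≤ θ * c u + D u := by
  set S : Set ℝ := insert (0:ℝ) {r : ℝ | ∃ v, 0 < c v ∧ r = -D v / c v} with hSdef
  have hbdd : ∀ r ∈ S, r ≤ 1 := by
    rintro r (rfl | ⟨v, hv, rfl⟩)
    · exact zero_le_one
    · rw [div_le_one hv]
      have := hmin v
      rw [max_eq_left hv.le] at this
      linarith
  have hbddA : BddAbove S := ⟨1, fun r hr => hbdd r hr⟩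
  have hS0 : (0:ℝ) ∈ S := Set.mem_insert 0 _
  refine ⟨sSup S, le_csSup hbddA hS0, csSup_le ⟨0, hS0⟩ hbdd, ?_⟩
  intro u
  rcases lt_trichotomy (c u) 0 with hcu | hcu | hcu
  · have hDu : 0 ≤ D u := by
      have := hmin u
      rw [max_eq_right hcu.le] at this
      linarith
    have hub : sSup S ≤ D u / (-c u) := by
      apply csSup_le ⟨0, hS0⟩
      rintro r (rfl | ⟨v, hv, rfl⟩)
      · exact div_nonneg hDu (by linarith)
      · rw [div_le_div_iff₀ hv (by linarith : (0:ℝ) < -c u)]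
        -- cross-convexity inequality
        have hdne : c v - c u ≠ 0 := by intro h0; nlinarith
        have hdpos : (0:ℝ) < c v - c u := by linarith
        set t : ℝ := (-c u) / (c v - c u) with htdef
        have ht0 : 0 ≤ t := div_nonneg (by linarith) hdpos.le
        have ht1 : t ≤ 1 := by rw [htdef, div_le_one hdpos]; linarith
        have e1 : t * (c v - c u) = -c u := by rw [htdef]; field_simp
        have hcw : c (t • v + (1 - t) • u) = t * c v + (1 - t) * c u :=
          hcaff t (1 - t) (by ring) v u
        have hcw0 : c (t • v + (1 - t) • u) = 0 := by
          rw [hcw]; nlinarith [e1]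
        have hDw : 0 ≤ D (t • v + (1 - t) • u) := by
          have := hmin (t • v + (1 - t) • u)
          rw [hcw0, max_self] at this
          linarith
        have hcomb := hD.2 (Set.mem_univ v) (Set.mem_univ u) ht0 (by linarith : (0:ℝ) ≤ 1 - t)
          (by ring)
        simp only [smul_eq_mul] at hcomb
        have h0le : 0 ≤ t * D v + (1 - t) * D u := le_trans hDw hcomb
        have h3 : 0 ≤ (t * D v + (1 - t) * D u) * (c v - c u) := mul_nonneg h0le hdpos.le
        have h4 : (t * D v + (1 - t) * D u) * (c v - c u) = -c u * D v + c v * D u := by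
          linear_combination (D v - D u) * e1
        nlinarith [h3, h4]
    have := (le_div_iff₀ (by linarith : (0:ℝ) < -c u)).mp hub
    nlinarith [this]
  · have := hmin u
    rw [hcu, max_self] at this
    have h0 : (0:ℝ) ≤ sSup S := le_csSup hbddA hS0
    nlinarith
  · have hmem : -D u / c u ∈ S := Set.mem_insert_of_mem _ ⟨u, hcu, rfl⟩
    have hle : -D u / c u ≤ sSup S := le_csSup hbddA hmem
    have := (div_le_iff₀ hcu).mp hle
    nlinarith [this]

end helpers
theorem stmt18 {E : Type*} [NormedAddCommGroup E] [InnerProductSpace ℝ E]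
    [FiniteDimensional ℝ E]
    (f h : E → ℝ) (hf : ConvexOn ℝ Set.univ f) (hh : ConvexOn ℝ Set.univ h)
    (f' : E → E) (hsub : ∀ x u : E, f x + ⟪f' x, u - x⟫ ≤ f u)
    (μ : ℝ) (hμ : 0 ≤ μ)
    (hhμ : ConvexOn ℝ Set.univ (fun u => h u - μ / 2 * ‖u‖ ^ 2))
    (xc xm : E) (lam : ℝ) (hlam : 0 < lam)
    (Af : E → ℝ) (hAfaff : ∃ (a : E) (b : ℝ), ∀ u, Af u = ⟪a, u⟫ + b)
    (hAfle : ∀ u, Af u ≤ f u)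
    (x : E)
    (hx : IsMinOn
      (fun u => max (Af u) (lin f f' u xm) + h u + ‖u - xc‖ ^ 2 / (2 * lam))
      Set.univ x) :
    ∃ θ : ℝ, θ ∈ Set.Icc (0 : ℝ) 1 ∧
      (lin f f' x xm < Af x → θ = 1) ∧
      (Af x < lin f f' x xm → θ = 0) ∧
      ConvexOn ℝ Set.univ (fun u =>
        max (θ * Af u + (1 - θ) * lin f f' u xm) (lin f f' u x) + h u -
          μ / 2 * ‖u‖ ^ 2) ∧
      (∀ u, max (θ * Af u + (1 - θ) * lin f f' u xm) (lin f f' u x) + h u ≤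
        f u + h u) ∧
      ConvexOn ℝ Set.univ (fun u =>
        θ * Af u + (1 - θ) * lin f f' u xm + h u - μ / 2 * ‖u‖ ^ 2) ∧
      (∀ u, θ * Af u + (1 - θ) * lin f f' u xm + h u ≤ f u + h u) ∧
      (θ * Af x + (1 - θ) * lin f f' x xm + h x =
        max (Af x) (lin f f' x xm) + h x) ∧
      IsMinOn
        (fun u => θ * Af u + (1 - θ) * lin f f' u xm + h u +
          ‖u - xc‖ ^ 2 / (2 * lam)) Set.univ x ∧
      (∀ τ ∈ Set.Ioo (0 : ℝ) 1, ∀ u,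
        τ * (θ * Af u + (1 - θ) * lin f f' u xm + h u) +
            (1 - τ) * (lin f f' u x + h u) ≤
          max (θ * Af u + (1 - θ) * lin f f' u xm) (lin f f' u x) + h u) := by
  obtain ⟨a0, b0, hA⟩ := hAfaff
  have hB : ∀ u, lin f f' u xm = ⟪f' xm, u⟫ + (f xm - ⟪f' xm, xm⟫) := by
    intro u; simp only [lin, inner_sub_right]; ring
  have hL : ∀ u, lin f f' u x = ⟪f' x, u⟫ + (f x - ⟪f' x, x⟫) := by
    intro u; simp only [lin, inner_sub_right]; ring
  have hlinle : ∀ y u, lin f f' u y ≤ f u := fun y u => hsub y u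
  have hp : ConvexOn ℝ Set.univ (fun u => ‖u - xc‖ ^ 2 / (2 * lam)) :=
    prox_convexOn xc lam hlam
  have hBconv : ConvexOn ℝ Set.univ (fun u => lin f f' u xm) :=
    convexOn_congr (aff_convexOn (f' xm) (f xm - ⟪f' xm, xm⟫)) (fun u => (hB u).symm)
  have hG : ∀ u, max (Af x) (lin f f' x xm) + h x + ‖x - xc‖ ^ 2 / (2 * lam) ≤
      max (Af u) (lin f f' u xm) + h u + ‖u - xc‖ ^ 2 / (2 * lam) :=
    fun u => isMinOn_iff.mp hx u (Set.mem_univ u)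
  -- the uniform part of the conclusion
  suffices key : ∃ θ : ℝ, 0 ≤ θ ∧ θ ≤ 1 ∧
      (lin f f' x xm < Af x → θ = 1) ∧
      (Af x < lin f f' x xm → θ = 0) ∧
      (θ * Af x + (1 - θ) * lin f f' x xm = max (Af x) (lin f f' x xm)) ∧
      (∀ u, θ * Af x + (1 - θ) * lin f f' x xm + h x + ‖x - xc‖ ^ 2 / (2 * lam) ≤
        θ * Af u + (1 - θ) * lin f f' u xm + h u + ‖u - xc‖ ^ 2 / (2 * lam)) by
    obtain ⟨θ, hθ0, hθ1, h1, h0, heqx, hminθ⟩ := key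
    have hAθ : ConvexOn ℝ Set.univ (fun u => θ * Af u + (1 - θ) * lin f f' u xm) := by
      apply convexOn_congr (aff_convexOn (θ • a0 + (1 - θ) • f' xm)
        (θ * b0 + (1 - θ) * (f xm - ⟪f' xm, xm⟫)))
      intro u
      rw [hA u, hB u, inner_add_left, real_inner_smul_left, real_inner_smul_left]
      ring
    have hLc : ConvexOn ℝ Set.univ (fun u => lin f f' u x) :=
      convexOn_congr (aff_convexOn (f' x) (f x - ⟪f' x, x⟫)) (fun u => (hL u).symm)
    have hAθle : ∀ u, θ * Af u + (1 - θ) * lin f f' u xm ≤ f u := by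
      intro u
      have h1' := hAfle u
      have h2' := hlinle xm u
      nlinarith
    refine ⟨θ, ⟨hθ0, hθ1⟩, h1, h0, ?_, ?_, ?_, ?_, by rw [heqx], ?_, ?_⟩
    · apply convexOn_congr ((hAθ.sup hLc).add hhμ)
      intro u
      simp only [Pi.add_apply, Pi.sup_apply]
      ring
    · intro u
      have := max_le (hAθle u) (hlinle x u)
      linarith
    · apply convexOn_congr (hAθ.add hhμ)
      intro u
      simp only [Pi.add_apply]
      ring
    · intro u
      have := hAθle u
      linarith
    · exact isMinOn_iff.mpr fun u _ => hminθ u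
    · intro τ hτ u
      obtain ⟨hτ0, hτ1⟩ := hτ
      have hm1 := le_max_left (θ * Af u + (1 - θ) * lin f f' u xm) (lin f f' u x)
      have hm2 := le_max_right (θ * Af u + (1 - θ) * lin f f' u xm) (lin f f' u x)
      nlinarith
  -- now produce θ together with the equality at x and the prox minimization
  have hcaff : ∀ s t : ℝ, s + t = 1 → ∀ u v : E,
      Af (s • u + t • v) - lin f f' (s • u + t • v) xm =
        s * (Af u - lin f f' u xm) + t * (Af v - lin f f' v xm) := by
    intro s t hst u v
    simp only [hA, hB, inner_add_right, real_inner_smul_right]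
    linear_combination (-(b0 - (f xm - ⟪f' xm, xm⟫))) * hst
  have hNconv : ConvexOn ℝ Set.univ
      (fun u => lin f f' u xm + h u + ‖u - xc‖ ^ 2 / (2 * lam)) :=
    convexOn_congr ((hBconv.add hh).add hp) (fun u => rfl)
  rcases lt_trichotomy (Af x) (lin f f' x xm) with hlt | heq | hlt
  · -- θ = 0
    refine ⟨0, le_refl 0, zero_le_one, fun hc => absurd hc (by linarith), fun _ => rfl, ?_, ?_⟩
    · rw [max_eq_right hlt.le]; ring
    · have hmin : ∀ u, Af u - lin f f' u xm < 0 →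
          lin f f' x xm + h x + ‖x - xc‖ ^ 2 / (2 * lam) ≤
            lin f f' u xm + h u + ‖u - xc‖ ^ 2 / (2 * lam) := by
        intro u hcu
        have := hG u
        rw [max_eq_right hlt.le, max_eq_right (by linarith : Af u ≤ lin f f' u xm)] at this
        exact this
      have hall := min_of_active (c := fun u => Af u - lin f f' u xm)
        (N := fun u => lin f f' u xm + h u + ‖u - xc‖ ^ 2 / (2 * lam))
        hcaff hNconv (by simpa using sub_neg.mpr hlt) hmin
      intro u
      have := hall u
      linarith
  · -- tie : use exists_theta
    have hD : ConvexOn ℝ Set.univ (fun u =>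
        lin f f' u xm + h u + ‖u - xc‖ ^ 2 / (2 * lam) -
          (lin f f' x xm + h x + ‖x - xc‖ ^ 2 / (2 * lam))) :=
      convexOn_congr (hNconv.add (convexOn_const
        (-(lin f f' x xm + h x + ‖x - xc‖ ^ 2 / (2 * lam))) convex_univ))
        (fun u => by simp [Pi.add_apply]; ring)
    have hmin : ∀ u, 0 ≤ max (Af u - lin f f' u xm) 0 +
        (lin f f' u xm + h u + ‖u - xc‖ ^ 2 / (2 * lam) -
          (lin f f' x xm + h x + ‖x - xc‖ ^ 2 / (2 * lam))) := by
      intro u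
      have hGu := hG u
      rw [heq, max_self] at hGu
      have hmax : max (Af u - lin f f' u xm) 0 + lin f f' u xm =
          max (Af u) (lin f f' u xm) := by
        rw [← max_add_add_right, sub_add_cancel, zero_add]
      linarith [hGu, hmax.ge, hmax.le]
    obtain ⟨θ, hθ0, hθ1, hkey⟩ := exists_theta hcaff hD hmin
    refine ⟨θ, hθ0, hθ1, fun hc => absurd hc (by linarith), fun hc => absurd hc (by linarith),
      ?_, ?_⟩
    · rw [heq, max_self]; ring
    · intro u
      have := hkey u
      rw [heq]
      linarith
  · -- θ = 1
    refine ⟨1, zero_le_one, le_refl 1, fun _ => rfl, fun hc => absurd hc (by linarith), ?_, ?_⟩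
    · rw [max_eq_left hlt.le]; ring
    · have hcaff' : ∀ s t : ℝ, s + t = 1 → ∀ u v : E,
          lin f f' (s • u + t • v) xm - Af (s • u + t • v) =
            s * (lin f f' u xm - Af u) + t * (lin f f' v xm - Af v) := by
        intro s t hst u v
        have := hcaff s t hst u v
        linarith
      have hN1conv : ConvexOn ℝ Set.univ
          (fun u => Af u + h u + ‖u - xc‖ ^ 2 / (2 * lam)) := by
        have hAconv : ConvexOn ℝ Set.univ Af :=
          convexOn_congr (aff_convexOn a0 b0) (fun u => (hA u).symm)
        exact convexOn_congr ((hAconv.add hh).add hp) (fun u => rfl)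
      have hmin : ∀ u, lin f f' u xm - Af u < 0 →
          Af x + h x + ‖x - xc‖ ^ 2 / (2 * lam) ≤
            Af u + h u + ‖u - xc‖ ^ 2 / (2 * lam) := by
        intro u hcu
        have := hG u
        rw [max_eq_left hlt.le, max_eq_left (by linarith : lin f f' u xm ≤ Af u)] at this
        exact this
      have hall := min_of_active (c := fun u => lin f f' u xm - Af u)
        (N := fun u => Af u + h u + ‖u - xc‖ ^ 2 / (2 * lam))
        hcaff' hN1conv (by simpa using sub_neg.mpr hlt) hmin
      intro u
      have := hall u
      linarith
end

section
/- The active set C(x) := { c ∈ C : ℓ_f(x; c) + h(x) = Γ(x; C) } is nonempty, and for any finite set C⁺ with C(x) ∪ {x} ⊆ C⁺ ⊆ C ∪ {x}, setting Γ⁺ := Γ(·; C⁺) and Γ̄ := Γ(·; C(x)), the following hold: (i) Γ⁺ and Γ̄ are μ-convex and satisfy Γ⁺ ≤ φ and Γ̄ ≤ φ pointwise; (ii) Γ̄(x) = Γ(x; C); (iii) x minimizes u ↦ Γ̄(u) + ‖u − x^c‖²/(2λ) over E; (iv) for every τ ∈ (0,1), τ·Γ̄ + (1 − τ)·(ℓ_f(·;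 x) + h) ≤ Γ⁺ pointwise. (Properties of the multiple-cuts bundle update scheme.) -/
open scoped RealInnerProductSpace

/-- The bundle function `Γ(·; C) := max_{c ∈ C} ℓ_f(·; c) + h` (for a finite
nonempty set `C`, the supremum is the maximum). -/
noncomputable def bundle {E : Type*} [NormedAddCommGroup E] [InnerProductSpace ℝ E]
    (f : E → ℝ) (f' : E → E) (h : E → ℝ) (C : Set E) (u : E) : ℝ :=
  sSup ((fun c => lin f f' u c) '' C) + h u

section helpers
variable {E : Type*} [NormedAddCommGroup E] [InnerProductSpace ℝ E]
  (f : E → ℝ) (f' : E → E)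

lemma lin_combo (a b : ℝ) (hab : a + b = 1) (u v c : E) :
    lin f f' (a • u + b • v) c = a * lin f f' u c + b * lin f f' v c := by
  simp only [lin, inner_sub_right, inner_add_right, real_inner_smul_right]
  linear_combination (f c - ⟪f' c, c⟫) * hab.symm

lemma sqnorm_combo (a b : ℝ) (ha : 0 ≤ a) (hb : 0 ≤ b) (hab : a + b = 1) (v w : E) :
    ‖a • v + b • w‖ ^ 2 ≤ a * ‖v‖ ^ 2 + b * ‖w‖ ^ 2 := by
  have h1 : ‖a • v + b • w‖ ≤ a * ‖v‖ + b * ‖w‖ := by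
    calc ‖a • v + b • w‖ ≤ ‖a • v‖ + ‖b • w‖ := norm_add_le _ _
    _ = a * ‖v‖ + b * ‖w‖ := by
        rw [norm_smul, norm_smul, Real.norm_eq_abs, Real.norm_eq_abs,
          abs_of_nonneg ha, abs_of_nonneg hb]
  nlinarith [norm_nonneg (a • v + b • w), norm_nonneg v, norm_nonneg w,
    sq_nonneg (‖v‖ - ‖w‖), mul_nonneg ha hb]

lemma bundle_convex (h : E → ℝ) (μ : ℝ)
    (hhμ : ConvexOn ℝ Set.univ (fun u => h u - μ / 2 * ‖u‖ ^ 2))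
    {D : Set E} (hD : D.Finite) (hne : D.Nonempty) :
    ConvexOn ℝ Set.univ (fun u => bundle f f' h D u - μ / 2 * ‖u‖ ^ 2) := by
  have hm : ConvexOn ℝ Set.univ (fun u => sSup ((fun c => lin f f' u c) '' D)) := by
    refine ⟨convex_univ, ?_⟩
    intro u _ v _ a b ha hb hab
    refine csSup_le (hne.image _) ?_
    rintro _ ⟨c, hc, rfl⟩
    simp only [smul_eq_mul]
    rw [lin_combo f f' a b hab u v c]
    have h1 := le_csSup ((hD.image (fun c => lin f f' u c)).bddAbove) ⟨c, hc, rfl⟩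
    have h2 := le_csSup ((hD.image (fun c => lin f f' v c)).bddAbove) ⟨c, hc, rfl⟩
    exact add_le_add (mul_le_mul_of_nonneg_left h1 ha) (mul_le_mul_of_nonneg_left h2 hb)
  have heq : (fun u => bundle f f' h D u - μ / 2 * ‖u‖ ^ 2)
      = fun u => (sSup ((fun c => lin f f' u c) '' D)) + (h u - μ / 2 * ‖u‖ ^ 2) := by
    funext u; simp only [bundle]; ring
  rw [heq]
  exact hm.add hhμ

lemma bundle_le (h : E → ℝ) (hsub : ∀ x u : E, f x + ⟪f' x, u - x⟫ ≤ f u)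
    {D : Set E} (hne : D.Nonempty) (u : E) :
    bundle f f' h D u ≤ f u + h u := by
  refine add_le_add ?_ le_rfl
  refine csSup_le (hne.image _) ?_
  rintro _ ⟨c, _, rfl⟩
  exact hsub c u
end helpers

set_option maxHeartbeats 1600000 in
theorem stmt19 {E : Type*} [NormedAddCommGroup E] [InnerProductSpace ℝ E]
    [FiniteDimensional ℝ E]
    (f h : E → ℝ) (hf : ConvexOn ℝ Set.univ f) (hh : ConvexOn ℝ Set.univ h)
    (f' : E → E) (hsub : ∀ x u : E, f x + ⟪f' x, u - x⟫ ≤ f u)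
    (μ : ℝ) (hμ : 0 ≤ μ)
    (hhμ : ConvexOn ℝ Set.univ (fun u => h u - μ / 2 * ‖u‖ ^ 2))
    (C : Set E) (hCfin : C.Finite) (hCne : C.Nonempty)
    (xc : E) (lam : ℝ) (hlam : 0 < lam)
    (x : E)
    (hx : IsMinOn (fun u => bundle f f' h C u + ‖u - xc‖ ^ 2 / (2 * lam))
      Set.univ x) :
    ∃ act : Set E,
      act = {c ∈ C | lin f f' x c + h x = bundle f f' h C x} ∧
      act.Nonempty ∧
      ∀ Cp : Set E, Cp.Finite → act ∪ {x} ⊆ Cp → Cp ⊆ C ∪ {x} →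
        ConvexOn ℝ Set.univ
          (fun u => bundle f f' h Cp u - μ / 2 * ‖u‖ ^ 2) ∧
        (∀ u, bundle f f' h Cp u ≤ f u + h u) ∧
        ConvexOn ℝ Set.univ
          (fun u => bundle f f' h act u - μ / 2 * ‖u‖ ^ 2) ∧
        (∀ u, bundle f f' h act u ≤ f u + h u) ∧
        bundle f f' h act x = bundle f f' h C x ∧
        IsMinOn (fun u => bundle f f' h act u + ‖u - xc‖ ^ 2 / (2 * lam))
          Set.univ x ∧
        (∀ τ ∈ Set.Ioo (0 : ℝ) 1, ∀ u,
          τ * bundle f f' h act u + (1 - τ) * (lin f f' u x + h u) ≤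
            bundle f f' h Cp u) := by
  classical
  set act : Set E := {c ∈ C | lin f f' x c + h x = bundle f f' h C x} with hact
  obtain ⟨_, ⟨c0, hc0C, rfl⟩, hc0⟩ :
      ∃ y ∈ (fun c => lin f f' x c) '' C, y = sSup ((fun c => lin f f' x c) '' C) := by
    have := (hCne.image (fun c => lin f f' x c)).csSup_mem (hCfin.image _)
    exact ⟨_, this, rfl⟩
  have hc0act : c0 ∈ act := ⟨hc0C, by rw [bundle, ← hc0]⟩
  have hactC : act ⊆ C := fun c hc => hc.1
  have hactfin : act.Finite := hCfin.subset hactC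
  have hactne : act.Nonempty := ⟨c0, hc0act⟩
  have hmx : sSup ((fun c => lin f f' x c) '' act) = sSup ((fun c => lin f f' x c) '' C) := by
    apply le_antisymm
    · exact csSup_le (hactne.image _) (by
        rintro _ ⟨c, hc, rfl⟩
        exact le_csSup ((hCfin.image _).bddAbove) ⟨c, hactC hc, rfl⟩)
    · rw [← hc0]
      exact le_csSup ((hactfin.image _).bddAbove) ⟨c0, hc0act, rfl⟩
  have hbx : bundle f f' h act x = bundle f f' h C x := by rw [bundle, bundle, hmx]
  refine ⟨act, rfl, hactne, ?_⟩
  intro Cp hCpfin hsub1 hsub2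
  have hxCp : x ∈ Cp := hsub1 (Or.inr rfl)
  have hCpne : Cp.Nonempty := ⟨x, hxCp⟩
  have hactCp : act ⊆ Cp := fun c hc => hsub1 (Or.inl hc)
  refine ⟨bundle_convex f f' h μ hhμ hCpfin hCpne,
    bundle_le f f' h hsub hCpne,
    bundle_convex f f' h μ hhμ hactfin hactne,
    bundle_le f f' h hsub hactne, hbx, ?_, ?_⟩
  · -- minimality
    rw [isMinOn_iff]
    intro u _
    by_contra hcon
    push_neg at hcon
    by_cases hA : (C \ act).Nonempty
    · -- main case
      obtain ⟨_, ⟨c1, hc1, rfl⟩, hδle⟩ :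
          ∃ y ∈ (fun c => sSup ((fun c => lin f f' x c) '' C) - lin f f' x c) '' (C \ act),
            ∀ z ∈ (fun c => sSup ((fun c => lin f f' x c) '' C) - lin f f' x c) '' (C \ act),
              y ≤ z := by
        have hfin := (hCfin.diff : (C \ act).Finite).image
          (fun c => sSup ((fun c => lin f f' x c) '' C) - lin f f' x c)
        have hne := hA.image (fun c => sSup ((fun c => lin f f' x c) '' C) - lin f f' x c)
        obtain ⟨y, hy, hyle⟩ := hfin.exists_minimalFor id _ hne
        exact ⟨y, hy, fun z hz => by
          by_contra hzy; push_neg at hzy; exact absurd (hyle hz hzy.le) (not_le.mpr hzy)⟩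
      set δ := sSup ((fun c => lin f f' x c) '' C) - lin f f' x c1 with hδdef
      have hδpos : 0 < δ := by
        have h1 : lin f f' x c1 ≤ sSup ((fun c => lin f f' x c) '' C) :=
          le_csSup ((hCfin.image _).bddAbove) ⟨c1, hc1.1, rfl⟩
        have h2 : lin f f' x c1 ≠ sSup ((fun c => lin f f' x c) '' C) := by
          intro heq
          exact hc1.2 ⟨hc1.1, by rw [bundle, ← heq]⟩
        have := lt_of_le_of_ne h1 h2
        simp only [hδdef]; linarith
      set K := sSup ((fun c => lin f f' u c) '' act) with hK
      set M := sSup ((fun c => lin f f' u c) '' C) with hM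
      set B := max (M - K) 0 with hB
      have hBnn : 0 ≤ B := le_max_right _ _
      have hden : 0 < δ + B := by linarith
      set t := δ / (2 * (δ + B)) with ht
      have ht0 : 0 < t := by positivity
      have htsum : t * δ + t * B = δ / 2 := by
        rw [ht]; field_simp
      have ht2 : t ≤ 1 / 2 := by
        nlinarith [mul_nonneg ht0.le hδpos.le, mul_nonneg ht0.le hBnn]
      have hkey : t * B ≤ (1 - t) * δ := by nlinarith
      set w := (1 - t) • x + t • u with hw
      -- bound on sSup over C at w
      have hmCw : sSup ((fun c => lin f f' w c) '' C)
          ≤ (1 - t) * sSup ((fun c => lin f f' x c) '' act) + t * K := by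
        refine csSup_le (hCne.image _) ?_
        rintro _ ⟨c, hcC, rfl⟩
        rw [show (fun c => lin f f' w c) c = lin f f' w c from rfl, hw,
          lin_combo f f' (1 - t) t (by ring) x u c]
        by_cases hca : c ∈ act
        · have h1 : lin f f' x c ≤ sSup ((fun c => lin f f' x c) '' act) :=
            le_csSup ((hactfin.image _).bddAbove) ⟨c, hca, rfl⟩
          have h2 : lin f f' u c ≤ K :=
            le_csSup ((hactfin.image _).bddAbove) ⟨c, hca, rfl⟩
          have ht1 : (0:ℝ) ≤ 1 - t := by linarith
          exact add_le_add (mul_le_mul_of_nonneg_left h1 ht1)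
            (mul_le_mul_of_nonneg_left h2 ht0.le)
        · have hδc : δ ≤ sSup ((fun c => lin f f' x c) '' C) - lin f f' x c := by
            exact hδle _ ⟨c, ⟨hcC, hca⟩, rfl⟩
          have h1 : lin f f' x c ≤ sSup ((fun c => lin f f' x c) '' act) - δ := by
            rw [hmx]; linarith
          have h2 : lin f f' u c ≤ K + B := by
            have : lin f f' u c ≤ M := le_csSup ((hCfin.image _).bddAbove) ⟨c, hcC, rfl⟩
            have : M - K ≤ B := le_max_left _ _
            linarith [le_csSup ((hCfin.image _).bddAbove)
              (⟨c, hcC, rfl⟩ : lin f f' u c ∈ (fun c => lin f f' u c) '' C)]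
          have ht1 : (0:ℝ) ≤ 1 - t := by linarith
          nlinarith [mul_le_mul_of_nonneg_left h1 ht1, mul_le_mul_of_nonneg_left h2 ht0.le]
      -- convexity of h
      have hhw : h w ≤ (1 - t) * h x + t * h u := by
        have := hh.2 (Set.mem_univ x) (Set.mem_univ u)
          (by linarith : (0:ℝ) ≤ 1 - t) ht0.le (by ring)
        simpa [smul_eq_mul] using this
      -- convexity of prox term
      have hpw : ‖w - xc‖ ^ 2 / (2 * lam)
          ≤ (1 - t) * (‖x - xc‖ ^ 2 / (2 * lam)) + t * (‖u - xc‖ ^ 2 / (2 * lam)) := by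
        have hwe : w - xc = (1 - t) • (x - xc) + t • (u - xc) := by
          rw [hw]; module
        have := sqnorm_combo (1 - t) t (by linarith) ht0.le (by ring) (x - xc) (u - xc)
        rw [← hwe] at this
        have h2lam : (0:ℝ) < 2 * lam := by linarith
        rw [div_le_iff₀ h2lam]
        have hexp : ((1 - t) * (‖x - xc‖ ^ 2 / (2 * lam)) + t * (‖u - xc‖ ^ 2 / (2 * lam)))
            * (2 * lam) = (1 - t) * ‖x - xc‖ ^ 2 + t * ‖u - xc‖ ^ 2 := by
          field_simp
        rw [hexp]; exact this
      have hxw := isMinOn_iff.mp hx w (Set.mem_univ w)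
      simp only [bundle] at hxw hcon
      have hlt : (1 - t) * (sSup ((fun c => lin f f' x c) '' act) + h x
              + ‖x - xc‖ ^ 2 / (2 * lam))
            + t * (K + h u + ‖u - xc‖ ^ 2 / (2 * lam))
          < sSup ((fun c => lin f f' x c) '' act) + h x + ‖x - xc‖ ^ 2 / (2 * lam) := by
        nlinarith [mul_pos ht0 (sub_pos.mpr hcon)]
      linarith [hxw, hmCw, hhw, hpw, hlt, hmx]
    · -- C ⊆ act, so act = C
      rw [Set.not_nonempty_iff_eq_empty, Set.diff_eq_empty] at hA
      have : act = C := le_antisymm hactC hA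
      rw [this] at hcon
      exact absurd (isMinOn_iff.mp hx u (Set.mem_univ u)) (not_le.mpr hcon)
  · -- part (iv)
    rintro τ ⟨hτ0, hτ1⟩ u
    have h1 : sSup ((fun c => lin f f' u c) '' act) ≤ sSup ((fun c => lin f f' u c) '' Cp) :=
      csSup_le (hactne.image _) (by
        rintro _ ⟨c, hc, rfl⟩
        exact le_csSup ((hCpfin.image _).bddAbove) ⟨c, hactCp hc, rfl⟩)
    have h2 : lin f f' u x ≤ sSup ((fun c => lin f f' u c) '' Cp) :=
      le_csSup ((hCpfin.image _).bddAbove) ⟨x, hxCp, rfl⟩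
    simp only [bundle]
    nlinarith [mul_le_mul_of_nonneg_left h1 hτ0.le,
      mul_le_mul_of_nonneg_left h2 (by linarith : (0:ℝ) ≤ 1 - τ)]
end
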